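/- arXiv:2312.17087 — 3 statements merged into one kernel-verified Lean document; each statement's English description precedes it below -/
import Mathlib

section
/- Let f̃ = (f_t)_{t∈[0,1]} be an area-preserving isotopy from id to a C¹ diffeomorphism f of 𝔻. Then the winding number W_{f̃} is bounded on (𝔻 × 𝔻) ∖ Δ: there exists a constant C such that |W_{f̃}(x,y)| ≤ C for all distinct x, y ∈ 𝔻. -/
open MeasureTheory Metric Set Filter Topology
open scoped Real ENNReal

noncomputable section

/-- The closed unit disk in `ℂ ≃ ℝ²`. -/
def Disk : Set ℂ := Metric.closedBall 0 1

/-- The boundary circle of the unit disk. -/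
def Bdry : Set ℂ := Metric.sphere 0 1

/-- An area-preserving isotopy of the closed unit disk starting at the identity:
a jointly continuous family `(f_t)_{t∈[0,1]}` of area-preserving `C¹` diffeomorphisms
of the disk with `f_0 = id`.  The maps are given as maps of the plane that restrict
to diffeomorphisms of the disk. -/
structure DiskIsotopy where
  ft : ℝ → ℂ → ℂ
  inv : ℝ → ℂ → ℂ
  jointCont : ContinuousOn (fun p : ℝ × ℂ => ft p.1 p.2) (Set.Icc (0:ℝ) 1 ×ˢ Disk)
  contDiff : ∀ t ∈ Set.Icc (0:ℝ) 1, ContDiff ℝ 1 (ft t)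
  contDiffInv : ∀ t ∈ Set.Icc (0:ℝ) 1, ContDiff ℝ 1 (inv t)
  bijOn : ∀ t ∈ Set.Icc (0:ℝ) 1, Set.BijOn (ft t) Disk Disk
  leftInv : ∀ t ∈ Set.Icc (0:ℝ) 1, ∀ z ∈ Disk, inv t (ft t z) = z
  mapsBdry : ∀ t ∈ Set.Icc (0:ℝ) 1, Set.MapsTo (ft t) Bdry Bdry
  areaPres : ∀ t ∈ Set.Icc (0:ℝ) 1, ∀ A : Set ℂ, A ⊆ Disk → MeasurableSet A →
    volume (ft t ⁻¹' A ∩ Disk) = volume A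
  init : ∀ z, ft 0 z = z

/-- `W` is (a choice of) the winding-number function of the isotopy `ft`:
for distinct points `x y` of the disk, `W x y = (θ(1) - θ(0))/(2π)` where `θ` is a
continuous angle function of the vector from `f_t x` to `f_t y`. -/
def IsWinding (ft : ℝ → ℂ → ℂ) (W : ℂ → ℂ → ℝ) : Prop :=
  ∀ x ∈ Disk, ∀ y ∈ Disk, x ≠ y →
    ∃ θ : ℝ → ℝ, ContinuousOn θ (Set.Icc 0 1) ∧
      (∀ t ∈ Set.Icc (0:ℝ) 1,
        (ft t y - ft t x) / (‖ft t y - ft t x‖ : ℂ) = Complex.exp ((θ t : ℂ) * Complex.I)) ∧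
      W x y = (θ 1 - θ 0) / (2 * π)

/-- `ρ` is the Poincaré rotation (translation) number of the lift of the boundary
isotopy of `ft` starting at the identity lift; the boundary circle is parametrized
as `s ↦ exp(2πis)`. -/
def IsRotNum (ft : ℝ → ℂ → ℂ) (ρ : ℝ) : Prop :=
  ∃ F : ℝ → ℝ → ℝ,
    Continuous (fun p : ℝ × ℝ => F p.1 p.2) ∧
    (∀ s, F 0 s = s) ∧
    (∀ t ∈ Set.Icc (0:ℝ) 1, ∀ s, F t (s + 1) = F t s + 1) ∧
    (∀ t ∈ Set.Icc (0:ℝ) 1, ∀ s : ℝ,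
      ft t (Complex.exp (((2 * π * s : ℝ) : ℂ) * Complex.I))
        = Complex.exp (((2 * π * F t s : ℝ) : ℂ) * Complex.I)) ∧
    Tendsto (fun n : ℕ => (F 1)^[n] 0 / (n : ℝ)) atTop (nhds ρ)

/-- `β` is a `C¹` one-form on the plane with `dβ = (1/π) dx ∧ dy`. -/
def IsPrimitive (β : ℂ → ℂ →L[ℝ] ℝ) : Prop :=
  ContDiff ℝ 1 β ∧
  ∀ z : ℂ,
    fderiv ℝ (fun w => β w Complex.I) z 1 - fderiv ℝ (fun w => β w 1) z Complex.I = 1 / π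

/-- `a` is the action function of the isotopy `ft` with respect to the primitive `β` :
`da = f*β - β` on the disk, and on the boundary `a` is the integral of `β` along the
trajectories of the isotopy. -/
def IsAction (ft : ℝ → ℂ → ℂ) (β : ℂ → ℂ →L[ℝ] ℝ) (a : ℂ → ℝ) : Prop :=
  (∀ x ∈ Disk,
    HasFDerivAt a (((β (ft 1 x)).comp (fderiv ℝ (ft 1) x)) - β x) x) ∧
  (∀ x ∈ Bdry, a x = ∫ t in (0:ℝ)..(1:ℝ), β (ft t x) (deriv (fun s => ft s x) t))

/-- The normalized area measure `ω` on the disk (two-dimensional Lebesgue measure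
divided by `π`), of total mass 1. -/
def diskMeasure : Measure ℂ := (ENNReal.ofReal π)⁻¹ • (volume.restrict Disk)

/-- The set of periodic points of `f` in the disk. -/
def PerSet (f : ℂ → ℂ) : Set ℂ := {x ∈ Disk | ∃ n : ℕ, 1 ≤ n ∧ f^[n] x = x}

/-- `f` is an irrational pseudo-rotation: it has exactly one periodic point,
assumed to be the origin. -/
def IsPseudoRotation (f : ℂ → ℂ) : Prop := PerSet f = {(0 : ℂ)}

/-- `f` is `C¹`-conjugate to a rigid rotation on the boundary circle. -/
def ConjRotOnBdry (f : ℂ → ℂ) : Prop :=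
  ∃ h h' : ℂ → ℂ, ContDiff ℝ 1 h ∧ ContDiff ℝ 1 h' ∧
    Set.MapsTo h Bdry Bdry ∧ Set.MapsTo h' Bdry Bdry ∧
    (∀ z ∈ Bdry, h' (h z) = z) ∧ (∀ z ∈ Bdry, h (h' z) = z) ∧
    ∃ α : ℝ, ∀ z ∈ Bdry, h (f (h' z)) = Complex.exp ((α : ℂ) * Complex.I) * z

/-- The set `𝕆(𝔻)` of pairs of points of the disk lying on disjoint orbits. -/
def OSet (f : ℂ → ℂ) : Set (ℂ × ℂ) :=
  {p | p.1 ∈ Disk ∧ p.2 ∈ Disk ∧ ∀ i j : ℕ, f^[i] p.1 ≠ f^[j] p.2}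

/-- `w` is (a choice of) the linearized winding-number function at `x` of the
isotopy `ft`. -/
def IsLinWinding (ft : ℝ → ℂ → ℂ) (x : ℂ) (w : ℂ → ℝ) : Prop :=
  ∀ ξ : ℂ, ξ ≠ 0 →
    ∃ ψ : ℝ → ℝ, ContinuousOn ψ (Set.Icc 0 1) ∧
      (∀ t ∈ Set.Icc (0:ℝ) 1,
        (fderiv ℝ (ft t) x ξ) / (‖fderiv ℝ (ft t) x ξ‖ : ℂ)
          = Complex.exp ((ψ t : ℂ) * Complex.I)) ∧
      w ξ = (ψ 1 - ψ 0) / (2 * π)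

/-- The `n`-fold concatenation of the isotopy `ft`: on `[i/n, (i+1)/n]` it is
`f_{nt-i} ∘ f^i`. -/
def concatIsotopy (ft : ℝ → ℂ → ℂ) (n : ℕ) : ℝ → ℂ → ℂ := fun t z =>
  let i := min (⌊(n : ℝ) * t⌋.toNat) (n - 1)
  ft ((n : ℝ) * t - (i : ℝ)) ((ft 1)^[i] z)

/-- The empirical measure `μ_n(x) = (1/n) ∑_{i<n} δ_{fⁱ(x)}`. -/
def empMeas (f : ℂ → ℂ) (n : ℕ) (x : ℂ) : Measure ℂ :=
  ((n : ℝ≥0∞))⁻¹ • ∑ i ∈ Finset.range n, Measure.dirac (f^[i] x)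


/-! ### Auxiliary lemmas -/

section Aux

open Complex

lemma unit_diff_le (a b : ℂ) (c : ℝ) (hc : 0 < c) (ha : c ≤ ‖a‖) (hb : b ≠ 0) :
    ‖a / (‖a‖:ℂ) - b / (‖b‖:ℂ)‖ ≤ 2 * ‖a - b‖ / c := by
  have ha0 : a ≠ 0 := by
    intro h; rw [h, norm_zero] at ha; linarith
  have hna : (0:ℝ) < ‖a‖ := lt_of_lt_of_le hc ha
  have hnb : (0:ℝ) < ‖b‖ := norm_pos_iff.mpr hb
  have hna' : ((‖a‖:ℝ):ℂ) ≠ 0 := by exact_mod_cast hna.ne'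
  have hnb' : ((‖b‖:ℝ):ℂ) ≠ 0 := by exact_mod_cast hnb.ne'
  have key : a / (‖a‖:ℂ) - b / (‖b‖:ℂ)
      = ((a-b) * (‖b‖:ℂ) + b * ((‖b‖:ℂ) - (‖a‖:ℂ))) / ((‖a‖:ℂ) * (‖b‖:ℂ)) := by
    rw [div_sub_div _ _ hna' hnb']
    congr 1; ring
  rw [key, norm_div]
  have e1 : ‖(‖b‖:ℂ) - (‖a‖:ℂ)‖ ≤ ‖a - b‖ := by
    have : ((‖b‖:ℝ):ℂ) - ((‖a‖:ℝ):ℂ) = (((‖b‖ - ‖a‖ : ℝ)):ℂ) := by push_cast; ring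
    rw [this, Complex.norm_real]
    calc |‖b‖ - ‖a‖| ≤ ‖b - a‖ := abs_norm_sub_norm_le b a
      _ = ‖a - b‖ := norm_sub_rev b a
  have h1 : ‖(a-b) * (‖b‖:ℂ) + b * ((‖b‖:ℂ) - (‖a‖:ℂ))‖ ≤ 2 * ‖a - b‖ * ‖b‖ := by
    calc ‖(a-b) * (‖b‖:ℂ) + b * ((‖b‖:ℂ) - (‖a‖:ℂ))‖
        ≤ ‖(a-b) * (‖b‖:ℂ)‖ + ‖b * ((‖b‖:ℂ) - (‖a‖:ℂ))‖ := norm_add_le _ _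
      _ = ‖a-b‖ * ‖b‖ + ‖b‖ * ‖(‖b‖:ℂ) - (‖a‖:ℂ)‖ := by
          rw [norm_mul, norm_mul, Complex.norm_real, Real.norm_eq_abs, abs_of_pos hnb]
      _ ≤ ‖a-b‖ * ‖b‖ + ‖b‖ * ‖a - b‖ := by nlinarith
      _ = 2 * ‖a - b‖ * ‖b‖ := by ring
  have h2 : ‖(‖a‖:ℂ) * (‖b‖:ℂ)‖ = ‖a‖ * ‖b‖ := by
    rw [norm_mul, Complex.norm_real, Complex.norm_real, Real.norm_eq_abs, Real.norm_eq_abs,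
      abs_of_pos hna, abs_of_pos hnb]
  rw [h2]
  rw [div_le_div_iff₀ (by positivity) hc]
  calc ‖(a-b) * (‖b‖:ℂ) + b * ((‖b‖:ℂ) - (‖a‖:ℂ))‖ * c ≤ (2 * ‖a - b‖ * ‖b‖) * ‖a‖ := by
        nlinarith [norm_nonneg ((a-b) * (‖b‖:ℂ) + b * ((‖b‖:ℂ) - (‖a‖:ℂ)))]
    _ = 2 * ‖a - b‖ * (‖a‖ * ‖b‖) := by ring

lemma norm_exp_sub_one (ψ : ℝ) :
    ‖Complex.exp ((ψ:ℂ) * Complex.I) - 1‖ = 2 * |Real.sin (ψ/2)| := by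
  rw [Complex.exp_mul_I]
  have h1 : Complex.cos (ψ:ℂ) + Complex.sin (ψ:ℂ) * Complex.I - 1
      = ((Real.cos ψ - 1 : ℝ) : ℂ) + ((Real.sin ψ : ℝ) : ℂ) * Complex.I := by
    rw [← Complex.ofReal_cos, ← Complex.ofReal_sin]; push_cast; ring
  rw [h1]
  have h2 : ‖((Real.cos ψ - 1 : ℝ) : ℂ) + ((Real.sin ψ : ℝ) : ℂ) * Complex.I‖
      = Real.sqrt ((Real.cos ψ - 1)^2 + (Real.sin ψ)^2) := by
    rw [Complex.norm_add_mul_I]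
  rw [h2]
  have hcos : Real.cos ψ = 1 - 2 * Real.sin (ψ/2) ^ 2 := by
    have := Real.cos_two_mul' (ψ/2)
    have h' : 2 * (ψ/2) = ψ := by ring
    rw [h'] at this
    nlinarith [Real.sin_sq_add_cos_sq (ψ/2)]
  have h3 : (Real.cos ψ - 1)^2 + (Real.sin ψ)^2 = (2 * |Real.sin (ψ/2)|)^2 := by
    have hs : Real.sin ψ ^2 + Real.cos ψ ^2 = 1 := Real.sin_sq_add_cos_sq ψ
    have : |Real.sin (ψ/2)|^2 = Real.sin (ψ/2)^2 := sq_abs _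
    nlinarith
  rw [h3, Real.sqrt_sq (by positivity)]

lemma exp_close_int (φ ε : ℝ)
    (h : ‖Complex.exp ((φ:ℂ) * Complex.I) - 1‖ ≤ ε) :
    ∃ k : ℤ, |φ - 2*π*k| ≤ π/2 * ε := by
  have hπ : (0:ℝ) < π := Real.pi_pos
  refine ⟨round (φ / (2*π)), ?_⟩
  set k := round (φ / (2*π))
  set ψ := φ - 2*π*k with hψdef
  have hψπ : |ψ| ≤ π := by
    have h0 := abs_sub_round (φ / (2*π))
    have he : ψ = (φ / (2*π) - k) * (2*π) := by field_simp; exact hψdef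
    rw [he, abs_mul, abs_of_pos (by positivity : (0:ℝ) < 2*π)]
    nlinarith
  have hsame : Complex.exp ((ψ:ℂ) * Complex.I) = Complex.exp ((φ:ℂ) * Complex.I) := by
    have : (φ:ℂ) * Complex.I = (ψ:ℂ) * Complex.I + (k:ℤ) * (2 * (π:ℂ) * Complex.I) := by
      rw [hψdef]; push_cast; ring
    rw [this, Complex.exp_add, Complex.exp_int_mul_two_pi_mul_I, mul_one]
  have hb : 2 * |Real.sin (ψ/2)| ≤ ε := by
    rw [← norm_exp_sub_one, hsame]; exact h
  have habs2 : |ψ/2| = |ψ|/2 := by rw [abs_div, _root_.abs_two]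
  have h1 : |ψ/2| ≤ π/2 := by rw [habs2]; linarith
  have hj : 2/π * |ψ/2| ≤ |Real.sin (ψ/2)| := by
    have h2 : 2/π * |ψ/2| ≤ Real.sin |ψ/2| := Real.mul_le_sin (abs_nonneg _) h1
    have h3 : Real.sin |ψ/2| = |Real.sin (ψ/2)| := by
      rcases le_or_gt 0 (ψ/2) with hle | hlt
      · have hs : 0 ≤ Real.sin (ψ/2) := Real.sin_nonneg_of_nonneg_of_le_pi hle
          (by rw [_root_.abs_of_nonneg hle] at h1; linarith)
        rw [_root_.abs_of_nonneg hle, _root_.abs_of_nonneg hs]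
      · have hs' : 0 ≤ Real.sin (-(ψ/2)) := Real.sin_nonneg_of_nonneg_of_le_pi
          (by linarith) (by rw [_root_.abs_of_neg hlt] at h1; linarith)
        rw [Real.sin_neg] at hs'
        have hsn : Real.sin (ψ/2) ≤ 0 := by linarith
        rw [_root_.abs_of_neg hlt, _root_.abs_of_nonpos hsn]
        exact Real.sin_neg _
    linarith [h3 ▸ h2]
  have h5 : 2/π * |ψ| ≤ ε := by
    rw [habs2] at hj; nlinarith
  have h6 : |ψ| = (π/2) * (2/π * |ψ|) := by field_simp
  calc |ψ| = (π/2) * (2/π * |ψ|) := h6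
    _ ≤ (π/2) * ε := by nlinarith
    _ = π/2 * ε := by ring

end Aux

section Isotopy

open Complex

variable (I : DiskIsotopy)

lemma one_mem_Icc : (1:ℝ) ∈ Set.Icc (0:ℝ) 1 := by norm_num
lemma zero_mem_Icc : (0:ℝ) ∈ Set.Icc (0:ℝ) 1 := by norm_num

lemma f_contDiff : ContDiff ℝ 1 (I.ft 1) := I.contDiff 1 one_mem_Icc

lemma f_injOn : Set.InjOn (I.ft 1) Disk := (I.bijOn 1 one_mem_Icc).injOn

lemma fderiv_comp_inv : ∀ x ∈ Disk,
    (fderiv ℝ (I.inv 1) (I.ft 1 x)).comp (fderiv ℝ (I.ft 1) x)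
      = ContinuousLinearMap.id ℝ ℂ := by
  have hf := f_contDiff I
  have hg : ContDiff ℝ 1 (I.inv 1) := I.contDiffInv 1 one_mem_Icc
  set F : ℂ → (ℂ →L[ℝ] ℂ) :=
    fun z => (fderiv ℝ (I.inv 1) (I.ft 1 z)).comp (fderiv ℝ (I.ft 1) z) with hF
  have hFc : Continuous F := by
    apply Continuous.clm_comp
    · exact (hg.continuous_fderiv one_ne_zero).comp hf.continuous
    · exact hf.continuous_fderiv one_ne_zero
  have hid : ∀ z ∈ Metric.ball (0:ℂ) 1, F z = ContinuousLinearMap.id ℝ ℂ := by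
    intro z hz
    have hmem : Metric.ball (0:ℂ) 1 ∈ 𝓝 z := Metric.isOpen_ball.mem_nhds hz
    have heq : (fun w => I.inv 1 (I.ft 1 w)) =ᶠ[𝓝 z] id := by
      filter_upwards [hmem] with w hw
      exact I.leftInv 1 one_mem_Icc w (Metric.ball_subset_closedBall hw)
    have hdg : DifferentiableAt ℝ (I.inv 1) (I.ft 1 z) :=
      (hg.differentiable one_ne_zero) _
    have hdf : DifferentiableAt ℝ (I.ft 1) z := (hf.differentiable one_ne_zero) z
    have h1 : fderiv ℝ (fun w => I.inv 1 (I.ft 1 w)) z = F z := by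
      rw [hF]
      exact fderiv_comp z hdg hdf
    have h2 : fderiv ℝ (fun w => I.inv 1 (I.ft 1 w)) z = fderiv ℝ (id : ℂ → ℂ) z :=
      Filter.EventuallyEq.fderiv_eq heq
    rw [← h1, h2, fderiv_id]
  intro x hx
  have hclos : Disk ⊆ closure (Metric.ball (0:ℂ) 1) := by
    rw [closure_ball (0:ℂ) one_ne_zero]; exact subset_rfl
  have := Set.EqOn.closure (fun z hz => hid z hz) hFc continuous_const
  exact this (hclos hx)

lemma fderiv_ne_zero : ∀ x ∈ Disk, ∀ u : ℂ, u ≠ 0 → fderiv ℝ (I.ft 1) x u ≠ 0 := by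
  intro x hx u hu h0
  have := fderiv_comp_inv I x hx
  have happ : (fderiv ℝ (I.inv 1) (I.ft 1 x)) (fderiv ℝ (I.ft 1) x u) = u := by
    have := congrArg (fun L => L u) this
    simpa using this
  rw [h0] at happ
  simp at happ
  exact hu happ.symm

lemma ftc_line (x y : ℂ) :
    I.ft 1 y - I.ft 1 x = ∫ s in (0:ℝ)..1, fderiv ℝ (I.ft 1) (x + s • (y - x)) (y - x) := by
  have hf := f_contDiff I
  have hd : ∀ s ∈ Set.uIcc (0:ℝ) 1,
      HasDerivAt (fun s : ℝ => I.ft 1 (x + s • (y - x)))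
        (fderiv ℝ (I.ft 1) (x + s • (y - x)) (y - x)) s := by
    intro s _
    have hγ : HasDerivAt (fun s : ℝ => x + s • (y - x)) (y - x) s := by
      have h1 : HasDerivAt (fun s : ℝ => s • (y - x)) ((1:ℝ) • (y - x)) s :=
        (hasDerivAt_id s).smul_const (y - x)
      rw [one_smul] at h1
      exact h1.const_add x
    have hF : HasFDerivAt (I.ft 1) (fderiv ℝ (I.ft 1) (x + s • (y - x))) (x + s • (y - x)) :=
      ((hf.differentiable one_ne_zero) _).hasFDerivAt
    exact hF.comp_hasDerivAt s hγ
  have hint : IntervalIntegrable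
      (fun s : ℝ => fderiv ℝ (I.ft 1) (x + s • (y - x)) (y - x)) volume 0 1 := by
    apply Continuous.intervalIntegrable
    exact ((hf.continuous_fderiv one_ne_zero).comp (by continuity)).clm_apply continuous_const
  have := intervalIntegral.integral_eq_sub_of_hasDerivAt hd hint
  rw [this]
  norm_num

/-- The averaged-derivative map: `(x, u, r) ↦ ∫₀¹ Df(x + sru) u ds`. -/
def Jmap (p : ℂ × ℂ × ℝ) : ℂ :=
  ∫ s in (0:ℝ)..1, fderiv ℝ (I.ft 1) (p.1 + (s * p.2.2) • p.2.1) p.2.1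

lemma Jmap_zero (x u : ℂ) : Jmap I (x, (u, 0)) = fderiv ℝ (I.ft 1) x u := by
  unfold Jmap
  simp

lemma Jmap_line (x v : ℂ) (hv : v ≠ 0) :
    I.ft 1 (x + v) - I.ft 1 x = (‖v‖ : ℝ) • Jmap I (x, (v / (‖v‖:ℂ), ‖v‖)) := by
  have hn : (0:ℝ) < ‖v‖ := norm_pos_iff.mpr hv
  have hn' : ((‖v‖:ℝ):ℂ) ≠ 0 := by exact_mod_cast hn.ne'
  have hunit : (‖v‖:ℝ) • (v / (‖v‖:ℂ)) = v := by
    rw [Complex.real_smul, mul_comm]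
    exact div_mul_cancel₀ v hn'
  have hrep : ∀ s : ℝ, x + s • v = x + (s * ‖v‖) • (v / (‖v‖:ℂ)) := by
    intro s; rw [mul_smul, hunit]
  have key := ftc_line I x (x + v)
  have h2 : x + v - x = v := by ring
  rw [h2] at key
  rw [key]
  unfold Jmap
  rw [← intervalIntegral.integral_smul]
  apply intervalIntegral.integral_congr
  intro s _
  show (fderiv ℝ (I.ft 1) (x + s • v)) v
      = ‖v‖ • (fderiv ℝ (I.ft 1) (x + (s * ‖v‖) • (v / (‖v‖:ℂ)))) (v / (‖v‖:ℂ))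
  rw [← hrep s, ← ContinuousLinearMap.map_smul, hunit]

/-- `(x,u,r) ↦ (∫₀¹ Df(x+sru) u ds) ⬝ conj u`. -/
def Nmap (p : ℂ × ℂ × ℝ) : ℂ := Jmap I p * (starRingEnd ℂ) p.2.1

lemma Ntilde_eq (x v : ℂ) (hv : v ≠ 0) :
    (I.ft 1 (x + v) - I.ft 1 x) * (starRingEnd ℂ) v
      = (‖v‖^2 : ℝ) • Nmap I (x, (v / (‖v‖:ℂ), ‖v‖)) := by
  have hn : (0:ℝ) < ‖v‖ := norm_pos_iff.mpr hv
  have hn' : ((‖v‖:ℝ):ℂ) ≠ 0 := by exact_mod_cast hn.ne'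
  rw [Jmap_line I x v hv]
  unfold Nmap
  have hconj : (starRingEnd ℂ) v = (‖v‖:ℝ) • (starRingEnd ℂ) (v / (‖v‖:ℂ)) := by
    have hv' : ((‖v‖:ℝ):ℂ) * (v / (‖v‖:ℂ)) = v := by
      rw [mul_comm]; exact div_mul_cancel₀ v hn'
    rw [Complex.real_smul]
    calc (starRingEnd ℂ) v = (starRingEnd ℂ) (((‖v‖:ℝ):ℂ) * (v / (‖v‖:ℂ))) := by rw [hv']
      _ = (starRingEnd ℂ) (((‖v‖:ℝ):ℂ)) * (starRingEnd ℂ) (v / (‖v‖:ℂ)) := map_mul _ _ _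
      _ = ((‖v‖:ℝ):ℂ) * (starRingEnd ℂ) (v / (‖v‖:ℂ)) := by rw [Complex.conj_ofReal]
  rw [hconj]
  rw [Complex.real_smul, Complex.real_smul, Complex.real_smul]
  push_cast
  ring

set_option maxHeartbeats 1000000 in
lemma Jmap_contAt (x0 u0 : ℂ) : ContinuousAt (Jmap I) (x0, (u0, 0)) := by
  have hf := f_contDiff I
  have hD : Continuous (fderiv ℝ (I.ft 1)) := hf.continuous_fderiv one_ne_zero
  rw [Metric.continuousAt_iff]
  intro ε hε
  have hK : IsCompact (Metric.closedBall x0 (3 + ‖u0‖)) := isCompact_closedBall _ _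
  have hUC : UniformContinuousOn (fderiv ℝ (I.ft 1)) (Metric.closedBall x0 (3 + ‖u0‖)) :=
    hK.uniformContinuousOn_of_continuous hD.continuousOn
  rw [Metric.uniformContinuousOn_iff] at hUC
  set M : ℝ := ‖fderiv ℝ (I.ft 1) x0‖ with hM
  have hM0 : 0 ≤ M := norm_nonneg _
  set ε1 : ℝ := ε / (2 * (‖u0‖ + 1)) with hε1
  have hε1pos : 0 < ε1 := by positivity
  obtain ⟨δ1, hδ1pos, hδ1⟩ := hUC ε1 hε1pos
  set δ : ℝ := min (min (δ1 / (2 + ‖u0‖ + 1)) 1) (ε / (2 * (M + 1))) with hδ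
  have hδpos : 0 < δ := by
    apply lt_min
    · apply lt_min
      · positivity
      · norm_num
    · positivity
  refine ⟨δ, hδpos, ?_⟩
  rintro ⟨x, u, r⟩ hdist
  have hδ1' : δ ≤ δ1 / (2 + ‖u0‖ + 1) := le_trans (min_le_left _ _) (min_le_left _ _)
  have hδle1 : δ ≤ 1 := le_trans (min_le_left _ _) (min_le_right _ _)
  have hδε : δ ≤ ε / (2 * (M + 1)) := min_le_right _ _
  rw [Prod.dist_eq] at hdist
  rw [Prod.dist_eq] at hdist
  rw [max_lt_iff] at hdist
  obtain ⟨hdx, hdur⟩ := hdist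
  rw [max_lt_iff] at hdur
  obtain ⟨hdu, hdr⟩ := hdur
  simp only [Real.dist_eq, sub_zero] at hdr
  rw [dist_eq_norm] at hdx hdu
  have hu_le : ‖u‖ ≤ ‖u0‖ + 1 := by
    calc ‖u‖ = ‖u0 + (u - u0)‖ := by ring_nf
      _ ≤ ‖u0‖ + ‖u - u0‖ := norm_add_le _ _
      _ ≤ ‖u0‖ + 1 := by linarith
  -- points on the segment stay near x0
  have hz : ∀ s : ℝ, s ∈ Set.uIoc (0:ℝ) 1 →
      dist (x + (s * r) • u) x0 < δ1 ∧ (x + (s * r) • u) ∈ Metric.closedBall x0 (3 + ‖u0‖) := by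
    intro s hs
    have hs01 : 0 < s ∧ s ≤ 1 := by
      rw [Set.uIoc_of_le (by norm_num : (0:ℝ) ≤ 1)] at hs
      exact ⟨hs.1, hs.2⟩
    have h1 : dist (x + (s * r) • u) x0 ≤ ‖x - x0‖ + |s| * |r| * ‖u‖ := by
      rw [dist_eq_norm]
      calc ‖x + (s * r) • u - x0‖ = ‖(x - x0) + (s * r) • u‖ := by ring_nf
        _ ≤ ‖x - x0‖ + ‖(s * r) • u‖ := norm_add_le _ _
        _ = ‖x - x0‖ + |s * r| * ‖u‖ := by rw [norm_smul, Real.norm_eq_abs]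
        _ = ‖x - x0‖ + |s| * |r| * ‖u‖ := by rw [abs_mul]
    have h2 : |s| * |r| * ‖u‖ ≤ δ * (‖u0‖ + 1) := by
      have : |s| ≤ 1 := by rw [abs_of_pos hs01.1]; exact hs01.2
      have h3 : |s| * |r| ≤ δ := by nlinarith [abs_nonneg r, abs_nonneg s, hdr]
      nlinarith [norm_nonneg u, hu_le, hδpos.le]
    have hbound : dist (x + (s * r) • u) x0 ≤ δ * (2 + ‖u0‖) := by
      have := h1.trans (by nlinarith [hdx.le] : ‖x - x0‖ + |s| * |r| * ‖u‖ ≤ δ + δ * (‖u0‖ + 1))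
      linarith [this]
    constructor
    · have : δ * (2 + ‖u0‖) < δ1 := by
        have h4 : δ * (2 + ‖u0‖ + 1) ≤ δ1 := by
          rw [le_div_iff₀ (by positivity)] at hδ1'
          linarith [hδ1']
        nlinarith [hδpos, norm_nonneg u0]
      linarith [hbound]
    · rw [Metric.mem_closedBall]
      have : δ * (2 + ‖u0‖) ≤ 2 + ‖u0‖ := by nlinarith [hδpos.le, norm_nonneg u0]
      linarith [hbound, norm_nonneg u0]
  -- rewrite the difference of integrals
  have hcont1 : Continuous (fun s : ℝ => fderiv ℝ (I.ft 1) (x + (s * r) • u) u) :=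
    (hD.comp (continuous_const.add ((continuous_id.mul continuous_const).smul continuous_const))).clm_apply continuous_const
  have hint1 : IntervalIntegrable (fun s : ℝ => fderiv ℝ (I.ft 1) (x + (s * r) • u) u)
      volume 0 1 := hcont1.intervalIntegrable _ _
  have hint2 : IntervalIntegrable (fun _ : ℝ => fderiv ℝ (I.ft 1) x0 u0)
      volume 0 1 := (continuous_const).intervalIntegrable _ _
  have hJ0 : Jmap I (x0, (u0, 0)) = ∫ _ in (0:ℝ)..1, fderiv ℝ (I.ft 1) x0 u0 := by
    rw [Jmap_zero]; simp
  have hJdiff : Jmap I (x, (u, r)) - Jmap I (x0, (u0, 0))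
      = ∫ s in (0:ℝ)..1, (fderiv ℝ (I.ft 1) (x + (s * r) • u) u - fderiv ℝ (I.ft 1) x0 u0) := by
    rw [hJ0]
    rw [intervalIntegral.integral_sub hint1 hint2]
    rfl
  rw [dist_eq_norm, hJdiff]
  have hbnd : ∀ s ∈ Set.uIoc (0:ℝ) 1,
      ‖fderiv ℝ (I.ft 1) (x + (s * r) • u) u - fderiv ℝ (I.ft 1) x0 u0‖
        ≤ ε/2 + M * δ := by
    intro s hs
    obtain ⟨hz1, hz2⟩ := hz s hs
    have hsplit : fderiv ℝ (I.ft 1) (x + (s * r) • u) u - fderiv ℝ (I.ft 1) x0 u0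
        = (fderiv ℝ (I.ft 1) (x + (s * r) • u) - fderiv ℝ (I.ft 1) x0) u
          + fderiv ℝ (I.ft 1) x0 (u - u0) := by
      rw [ContinuousLinearMap.sub_apply, ContinuousLinearMap.map_sub]
      ring
    rw [hsplit]
    have hA : ‖(fderiv ℝ (I.ft 1) (x + (s * r) • u) - fderiv ℝ (I.ft 1) x0) u‖
        ≤ ε1 * (‖u0‖ + 1) := by
      have hop := (fderiv ℝ (I.ft 1) (x + (s * r) • u)
        - fderiv ℝ (I.ft 1) x0).le_opNorm u
      have hdD : ‖fderiv ℝ (I.ft 1) (x + (s * r) • u) - fderiv ℝ (I.ft 1) x0‖ ≤ ε1 := by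
        have := hδ1 _ hz2 x0 (Metric.mem_closedBall_self (by positivity)) hz1
        rw [dist_eq_norm] at this
        exact this.le
      calc ‖(fderiv ℝ (I.ft 1) (x + (s * r) • u) - fderiv ℝ (I.ft 1) x0) u‖
          ≤ ‖fderiv ℝ (I.ft 1) (x + (s * r) • u) - fderiv ℝ (I.ft 1) x0‖ * ‖u‖ := hop
        _ ≤ ε1 * (‖u0‖ + 1) := by
            have hn2 := norm_nonneg (fderiv ℝ (I.ft 1) (x + (s * r) • u) - fderiv ℝ (I.ft 1) x0)
            nlinarith [norm_nonneg u, hu_le, hε1pos.le]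
    have hB : ‖fderiv ℝ (I.ft 1) x0 (u - u0)‖ ≤ M * δ := by
      have hop := (fderiv ℝ (I.ft 1) x0).le_opNorm (u - u0)
      calc ‖fderiv ℝ (I.ft 1) x0 (u - u0)‖ ≤ M * ‖u - u0‖ := hop
        _ ≤ M * δ := by nlinarith [hdu.le]
    have hε1eq : ε1 * (‖u0‖ + 1) = ε / 2 := by
      rw [hε1]; field_simp
    calc ‖(fderiv ℝ (I.ft 1) (x + (s * r) • u) - fderiv ℝ (I.ft 1) x0) u
          + fderiv ℝ (I.ft 1) x0 (u - u0)‖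
        ≤ ‖(fderiv ℝ (I.ft 1) (x + (s * r) • u) - fderiv ℝ (I.ft 1) x0) u‖
          + ‖fderiv ℝ (I.ft 1) x0 (u - u0)‖ := norm_add_le _ _
      _ ≤ ε/2 + M * δ := by rw [← hε1eq]; linarith
  have := intervalIntegral.norm_integral_le_of_norm_le_const hbnd
  have hMδ : M * δ < ε / 2 := by
    have h5 : δ * (2 * (M+1)) ≤ ε := by
      rw [le_div_iff₀ (by positivity)] at hδε
      linarith
    nlinarith [hδpos]
  calc ‖∫ s in (0:ℝ)..1, (fderiv ℝ (I.ft 1) (x + (s * r) • u) u - fderiv ℝ (I.ft 1) x0 u0)‖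
      ≤ (ε/2 + M * δ) * |1 - 0| := this
    _ = ε/2 + M * δ := by norm_num
    _ < ε := by linarith

lemma conj_ne_zero' {c : ℂ} (hc : c ≠ 0) : (starRingEnd ℂ) c ≠ 0 := by
  intro h
  apply hc
  have := congrArg (starRingEnd ℂ) h
  simpa using this

lemma exp_arg_eq {c : ℂ} (hc : c ≠ 0) :
    Complex.exp ((Complex.arg c : ℝ) * Complex.I) = c / (‖c‖ : ℝ) := by
  have habs : (‖c‖ : ℂ) ≠ 0 := by
    simp [norm_ne_zero_iff.mpr hc]
  rw [eq_div_iff habs]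
  rw [mul_comm]
  exact Complex.norm_mul_exp_arg_mul_I c

lemma quad_div_eq_one (A B w : ℂ) (hA : A ≠ 0) (hB : B ≠ 0) (hw : w ≠ 0) :
    A / (‖A‖ : ℝ) / (B / (‖B‖ : ℝ))
      / ((A * (starRingEnd ℂ) B * (starRingEnd ℂ) w)
          / ((‖A‖ * ‖B‖ * ‖w‖ : ℝ):ℂ))
      / (w / (‖w‖ : ℝ)) = 1 := by
  have hAn : ((‖A‖ : ℝ):ℂ) ≠ 0 := by simp [norm_ne_zero_iff.mpr hA]
  have hBn : ((‖B‖ : ℝ):ℂ) ≠ 0 := by simp [norm_ne_zero_iff.mpr hB]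
  have hwn : ((‖w‖ : ℝ):ℂ) ≠ 0 := by simp [norm_ne_zero_iff.mpr hw]
  have hBB : B * (starRingEnd ℂ) B = ((‖B‖ : ℝ):ℂ)^2 := by
    rw [Complex.mul_conj, Complex.normSq_eq_norm_sq]; push_cast; ring
  have hww : w * (starRingEnd ℂ) w = ((‖w‖ : ℝ):ℂ)^2 := by
    rw [Complex.mul_conj, Complex.normSq_eq_norm_sq]; push_cast; ring
  have hcB : (starRingEnd ℂ) B = ((‖B‖ : ℝ):ℂ)^2 / B := by
    rw [eq_div_iff hB]; rw [mul_comm]; exact hBB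
  have hcw : (starRingEnd ℂ) w = ((‖w‖ : ℝ):ℂ)^2 / w := by
    rw [eq_div_iff hw]; rw [mul_comm]; exact hww
  rw [hcB, hcw]
  push_cast
  field_simp

set_option maxHeartbeats 1000000 in
lemma winding_mod (W : ℂ → ℂ → ℝ) (hW : IsWinding I.ft W)
    {x y : ℂ} (hx : x ∈ Disk) (hy : y ∈ Disk) (hxy : x ≠ y) (w : ℂ) (hw : w ≠ 0) :
    ∃ m : ℤ, 2*π*(W x y)
      = Complex.arg ((I.ft 1 y - I.ft 1 x) * (starRingEnd ℂ) (y - x) * (starRingEnd ℂ) w)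
        + Complex.arg w + 2*π*m := by
  obtain ⟨θ, hθc, hθ, hWeq⟩ := hW x hx y hy hxy
  have hB : y - x ≠ 0 := sub_ne_zero.mpr (Ne.symm hxy)
  have hA : I.ft 1 y - I.ft 1 x ≠ 0 := by
    rw [sub_ne_zero]
    exact (f_injOn I).ne hy hx (Ne.symm hxy)
  have hz : (I.ft 1 y - I.ft 1 x) * (starRingEnd ℂ) (y - x) * (starRingEnd ℂ) w ≠ 0 :=
    mul_ne_zero (mul_ne_zero hA (conj_ne_zero' hB)) (conj_ne_zero' hw)
  have h1 := hθ 1 one_mem_Icc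
  have h0 := hθ 0 zero_mem_Icc
  rw [I.init x, I.init y] at h0
  set c : ℝ := θ 1 - θ 0
    - Complex.arg ((I.ft 1 y - I.ft 1 x) * (starRingEnd ℂ) (y - x) * (starRingEnd ℂ) w)
    - Complex.arg w with hcdef
  have hexp1 : Complex.exp ((c:ℂ) * Complex.I) = 1 := by
    have hsplit : (c:ℂ) * Complex.I
        = ((θ 1 : ℝ):ℂ) * Complex.I - ((θ 0 : ℝ):ℂ) * Complex.I
          - ((Complex.arg ((I.ft 1 y - I.ft 1 x) * (starRingEnd ℂ) (y - x)
              * (starRingEnd ℂ) w) : ℝ):ℂ) * Complex.I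
          - ((Complex.arg w : ℝ):ℂ) * Complex.I := by
      rw [hcdef]; push_cast; ring
    rw [hsplit, Complex.exp_sub, Complex.exp_sub, Complex.exp_sub]
    rw [← h1, ← h0, exp_arg_eq hz, exp_arg_eq hw]
    have haz : ‖(I.ft 1 y - I.ft 1 x) * (starRingEnd ℂ) (y - x) * (starRingEnd ℂ) w‖
        = ‖I.ft 1 y - I.ft 1 x‖ * ‖y - x‖ * ‖w‖ := by
      rw [norm_mul, norm_mul, Complex.norm_conj, Complex.norm_conj]
    rw [haz]
    exact quad_div_eq_one _ _ _ hA hB hw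
  rw [Complex.exp_eq_one_iff] at hexp1
  obtain ⟨n, hn⟩ := hexp1
  have hc2 : (c:ℂ) = (n:ℂ) * (2*(π:ℂ)) := by
    have : (c:ℂ) * Complex.I = ((n:ℂ) * (2*(π:ℂ))) * Complex.I := by
      rw [hn]; ring
    exact mul_right_cancel₀ Complex.I_ne_zero this
  have hcr : c = n * (2*π) := by exact_mod_cast hc2
  refine ⟨n, ?_⟩
  have h2W : 2*π*(W x y) = θ 1 - θ 0 := by
    rw [hWeq]
    field_simp
  rw [h2W]
  rw [hcdef] at hcr
  linarith [hcr]

/-- The configuration set of distinct pairs in the disk. -/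
def Pset : Set (ℂ × ℂ) := {q | q.1 ∈ Disk ∧ q.2 ∈ Disk ∧ q.1 ≠ q.2}

lemma pi2_int_ge (mm : ℤ) : π ≤ |π - 2*π*mm| := by
  have hπ := Real.pi_pos
  have h1 : π - 2*π*mm = π * (1 - 2*mm) := by push_cast; ring
  rw [h1, abs_mul, abs_of_pos hπ]
  have h2 : (1:ℝ) ≤ |1 - 2*(mm:ℝ)| := by
    have h3 : ((1 - 2*mm : ℤ):ℝ) = 1 - 2*(mm:ℝ) := by push_cast; ring
    rw [← h3, ← Int.cast_abs]
    have : (1:ℤ) ≤ |1 - 2*mm| := Int.one_le_abs (by omega)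
    exact_mod_cast this
  nlinarith

lemma pi2_int_ge' (mm : ℤ) : π ≤ |-π - 2*π*mm| := by
  have hπ := Real.pi_pos
  have h1 : -π - 2*π*mm = π * (-1 - 2*mm) := by push_cast; ring
  rw [h1, abs_mul, abs_of_pos hπ]
  have h2 : (1:ℝ) ≤ |-1 - 2*(mm:ℝ)| := by
    have h3 : ((-1 - 2*mm : ℤ):ℝ) = -1 - 2*(mm:ℝ) := by push_cast; ring
    rw [← h3, ← Int.cast_abs]
    have : (1:ℤ) ≤ |-1 - 2*mm| := Int.one_le_abs (by omega)
    exact_mod_cast this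
  nlinarith

set_option maxHeartbeats 2000000 in
lemma W_continuousOn (W : ℂ → ℂ → ℝ) (hW : IsWinding I.ft W) :
    ContinuousOn (fun q : ℂ × ℂ => W q.1 q.2) Pset := by
  rintro ⟨x0, y0⟩ ⟨hx0, hy0, hne0⟩
  simp only at hx0 hy0 hne0
  rw [Metric.continuousWithinAt_iff]
  intro ε hε
  have hπ := Real.pi_pos
  set ε2 : ℝ := min ε 1 / 2 with hε2def
  have hε2pos : 0 < ε2 := by
    apply div_pos _ (by norm_num)
    exact lt_min hε (by norm_num)
  have hε2le : ε2 ≤ 1/2 := by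
    have : min ε 1 ≤ 1 := min_le_right _ _
    rw [hε2def]; linarith
  -- the displacement map
  set Θ : ℝ × (ℂ × ℂ) → ℂ := fun a => I.ft a.1 a.2.2 - I.ft a.1 a.2.1 with hΘdef
  have hΘc : ContinuousOn Θ (Set.Icc (0:ℝ) 1 ×ˢ (Disk ×ˢ Disk)) := by
    have hmap1 : Set.MapsTo (fun a : ℝ × (ℂ × ℂ) => (a.1, a.2.2))
        (Set.Icc (0:ℝ) 1 ×ˢ (Disk ×ˢ Disk)) (Set.Icc (0:ℝ) 1 ×ˢ Disk) := by
      rintro ⟨t, x, y⟩ ⟨ht, hx, hy⟩; exact ⟨ht, hy⟩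
    have hmap2 : Set.MapsTo (fun a : ℝ × (ℂ × ℂ) => (a.1, a.2.1))
        (Set.Icc (0:ℝ) 1 ×ˢ (Disk ×ˢ Disk)) (Set.Icc (0:ℝ) 1 ×ˢ Disk) := by
      rintro ⟨t, x, y⟩ ⟨ht, hx, hy⟩; exact ⟨ht, hx⟩
    have hc1 : ContinuousOn (fun a : ℝ × (ℂ × ℂ) => I.ft a.1 a.2.2)
        (Set.Icc (0:ℝ) 1 ×ˢ (Disk ×ˢ Disk)) :=
      ContinuousOn.comp I.jointCont
        ((continuous_fst.prodMk continuous_snd.snd).continuousOn) hmap1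
    have hc2 : ContinuousOn (fun a : ℝ × (ℂ × ℂ) => I.ft a.1 a.2.1)
        (Set.Icc (0:ℝ) 1 ×ˢ (Disk ×ˢ Disk)) :=
      ContinuousOn.comp I.jointCont
        ((continuous_fst.prodMk continuous_snd.fst).continuousOn) hmap2
    exact hc1.sub hc2
  set r0 : ℝ := dist x0 y0 / 4 with hr0def
  have hr0 : 0 < r0 := by
    have := dist_pos.mpr hne0
    rw [hr0def]; linarith
  set T : Set (ℝ × (ℂ × ℂ)) :=
    Set.Icc (0:ℝ) 1 ×ˢ (Metric.closedBall (x0, y0) r0 ∩ Disk ×ˢ Disk) with hTdef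
  have hTsub : T ⊆ Set.Icc (0:ℝ) 1 ×ˢ (Disk ×ˢ Disk) := by
    rintro ⟨t, q⟩ ⟨ht, hq1, hq2⟩
    exact ⟨ht, hq2⟩
  have hTc : IsCompact T := by
    apply isCompact_Icc.prod
    apply (isCompact_closedBall _ _).inter_right
    exact IsClosed.prod Metric.isClosed_closedBall Metric.isClosed_closedBall
  -- membership helper
  have hmemT : ∀ (t : ℝ), t ∈ Set.Icc (0:ℝ) 1 → ∀ q : ℂ × ℂ, dist q (x0, y0) ≤ r0 →
      q.1 ∈ Disk → q.2 ∈ Disk → (t, q) ∈ T := by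
    rintro t ht ⟨x, y⟩ hd hx hy
    exact ⟨ht, Metric.mem_closedBall.mpr hd, hx, hy⟩
  -- distinctness on T
  have hTne : ∀ a ∈ T, a.2.1 ≠ a.2.2 := by
    rintro ⟨t, x, y⟩ ⟨ht, hq1, hq2⟩
    simp only
    have hd : dist (x, y) (x0, y0) ≤ r0 := Metric.mem_closedBall.mp hq1
    rw [Prod.dist_eq, sup_le_iff] at hd
    intro hxy
    subst hxy
    have hr04 : r0 = dist x0 y0 / 4 := rfl
    have h4 : dist x0 y0 ≤ dist x0 x + dist x y0 := dist_triangle _ _ _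
    have hxx : dist x0 x ≤ r0 := by rw [dist_comm]; exact hd.1
    have hyy : dist x y0 ≤ r0 := hd.2
    rw [hr04] at hxx hyy
    linarith
  have hΘne : ∀ a ∈ T, Θ a ≠ 0 := by
    rintro ⟨t, x, y⟩ ha
    obtain ⟨ht, hq1, hx, hy⟩ := ha
    have hne := hTne _ ⟨ht, hq1, hx, hy⟩
    simp only at hne
    show I.ft t y - I.ft t x ≠ 0
    rw [sub_ne_zero]
    exact ((I.bijOn t ht).injOn.ne hy hx (Ne.symm hne))
  -- minimum of the norm on T
  have hTnon : T.Nonempty := ⟨(0, (x0, y0)),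
    ⟨zero_mem_Icc, Metric.mem_closedBall_self hr0.le, hx0, hy0⟩⟩
  obtain ⟨amin, haminT, hmin⟩ := hTc.exists_isMinOn hTnon (hΘc.mono hTsub).norm
  set c : ℝ := ‖Θ amin‖ with hcdef
  have hc : 0 < c := norm_pos_iff.mpr (hΘne amin haminT)
  have hminle : ∀ a ∈ T, c ≤ ‖Θ a‖ := fun a ha => hmin ha
  -- uniform continuity
  have hUC := (hTc.uniformContinuousOn_of_continuous (hΘc.mono hTsub))
  rw [Metric.uniformContinuousOn_iff] at hUC
  set η : ℝ := c * ε2 / 2 with hηdef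
  have hηpos : 0 < η := by positivity
  obtain ⟨δ1, hδ1pos, hδ1⟩ := hUC η hηpos
  refine ⟨min δ1 r0, lt_min hδ1pos hr0, ?_⟩
  rintro ⟨x, y⟩ ⟨hx, hy, hxy⟩ hdq
  simp only at hx hy hxy
  have hdqδ1 : dist (x, y) (x0, y0) < δ1 := lt_of_lt_of_le hdq (min_le_left _ _)
  have hdqr0 : dist (x, y) (x0, y0) ≤ r0 := le_of_lt (lt_of_lt_of_le hdq (min_le_right _ _))
  obtain ⟨θq, hθqc, hθq, hWq⟩ := hW x hx y hy hxy
  obtain ⟨θp, hθpc, hθp, hWp⟩ := hW x0 hx0 y0 hy0 hne0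
  -- closeness of unit vectors
  have hexpd : ∀ t ∈ Set.Icc (0:ℝ) 1,
      ‖Complex.exp (((θq t - θp t : ℝ):ℂ) * Complex.I) - 1‖ ≤ ε2 := by
    intro t ht
    have hqT : (t, (x, y)) ∈ T := hmemT t ht (x, y) hdqr0 hx hy
    have hpT : (t, (x0, y0)) ∈ T :=
      hmemT t ht (x0, y0) (by rw [dist_self]; exact hr0.le) hx0 hy0
    have hclose : dist (Θ (t, (x, y))) (Θ (t, (x0, y0))) < η := by
      apply hδ1 _ hqT _ hpT
      rw [Prod.dist_eq, dist_self]
      calc (0:ℝ) ⊔ dist (x, y) (x0, y0) = dist (x, y) (x0, y0) := sup_eq_right.mpr dist_nonneg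
        _ < δ1 := hdqδ1
    set at' : ℂ := I.ft t y - I.ft t x with hat
    set bt : ℂ := I.ft t y0 - I.ft t x0 with hbt
    have hΘq : Θ (t, (x, y)) = at' := rfl
    have hΘp : Θ (t, (x0, y0)) = bt := rfl
    have hbtne : bt ≠ 0 := by rw [← hΘp]; exact hΘne _ hpT
    have hatc : c ≤ ‖at'‖ := by rw [← hΘq]; exact hminle _ hqT
    have hatne : at' ≠ 0 := by
      intro h; rw [h, norm_zero] at hatc; linarith
    have hbtnorm : ((‖bt‖:ℝ):ℂ) ≠ 0 := by
      simp [norm_eq_zero, hbtne]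
    have hsplit2 : ((θq t - θp t : ℝ):ℂ) * Complex.I
        = ((θq t : ℝ):ℂ) * Complex.I - ((θp t : ℝ):ℂ) * Complex.I := by push_cast; ring
    rw [hsplit2, Complex.exp_sub, ← hθq t ht, ← hθp t ht, ← hat, ← hbt]
    have hYnorm : ‖bt / ((‖bt‖:ℝ):ℂ)‖ = 1 := by
      rw [norm_div, Complex.norm_real, Real.norm_eq_abs,
        abs_of_pos (norm_pos_iff.mpr hbtne), div_self (norm_pos_iff.mpr hbtne).ne']
    have hYne : bt / ((‖bt‖:ℝ):ℂ) ≠ 0 := by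
      intro h; rw [h, norm_zero] at hYnorm; norm_num at hYnorm
    have hquot : (at' / ((‖at'‖:ℝ):ℂ) - bt / ((‖bt‖:ℝ):ℂ)) / (bt / ((‖bt‖:ℝ):ℂ))
        = at' / ((‖at'‖:ℝ):ℂ) / (bt / ((‖bt‖:ℝ):ℂ)) - 1 := by
      rw [sub_div, div_self hYne]
    rw [← hquot, norm_div, hYnorm, div_one]
    have hdnorm : ‖at' - bt‖ < η := by
      rw [← hΘq, ← hΘp, ← dist_eq_norm]; exact hclose
    calc ‖at' / ((‖at'‖:ℝ):ℂ) - bt / ((‖bt‖:ℝ):ℂ)‖ ≤ 2 * ‖at' - bt‖ / c :=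
          unit_diff_le at' bt c hc hatc hbtne
      _ ≤ 2 * η / c := by
          have := hdnorm.le
          gcongr
      _ = ε2 := by rw [hηdef]; field_simp
  -- the lift difference
  set d : ℝ → ℝ := fun t => θq t - θp t with hddef
  set e : ℝ → ℝ := fun t => d t - d 0 with hedef
  have hdc : ContinuousOn d (Set.Icc (0:ℝ) 1) := hθqc.sub hθpc
  have hec : ContinuousOn e (Set.Icc (0:ℝ) 1) := hdc.sub continuousOn_const
  have he0 : e 0 = 0 := by rw [hedef]; simp
  have hstep : ∀ t ∈ Set.Icc (0:ℝ) 1, ∃ m : ℤ, |e t - 2*π*m| ≤ π * ε2 := by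
    intro t ht
    obtain ⟨kt, hkt⟩ := exp_close_int (d t) ε2 (hexpd t ht)
    obtain ⟨k0, hk0⟩ := exp_close_int (d 0) ε2 (hexpd 0 zero_mem_Icc)
    refine ⟨kt - k0, ?_⟩
    have hcast : e t - 2*π*((kt - k0 : ℤ):ℝ) = (d t - 2*π*kt) - (d 0 - 2*π*k0) := by
      rw [hedef]; push_cast; ring
    rw [hcast]
    calc |(d t - 2*π*kt) - (d 0 - 2*π*k0)| ≤ |d t - 2*π*kt| + |d 0 - 2*π*k0| := abs_sub _ _
      _ ≤ π/2 * ε2 + π/2 * ε2 := by linarith [hkt, hk0]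
      _ = π * ε2 := by ring
  have hclaim : ∀ t ∈ Set.Icc (0:ℝ) 1, |e t| ≤ π * ε2 := by
    by_contra hcon
    push_neg at hcon
    obtain ⟨t, ht, hgt⟩ := hcon
    obtain ⟨m, hm⟩ := hstep t ht
    have hm0 : m ≠ 0 := by
      intro h
      rw [h] at hm
      push_cast at hm
      rw [mul_zero, sub_zero] at hm
      linarith [hgt, hm]
    have hbig : π < |e t| := by
      have h2 : (2:ℝ)*π ≤ |2*π*(m:ℝ)| := by
        rw [abs_mul, abs_of_pos (by positivity : (0:ℝ) < 2*π)]
        have : (1:ℝ) ≤ |(m:ℝ)| := by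
          rw [← Int.cast_abs]
          exact_mod_cast Int.one_le_abs hm0
        nlinarith
      have h3 : |2*π*(m:ℝ)| ≤ |e t| + |e t - 2*π*m| := by
        have h4 : |2*π*(m:ℝ)| = |e t - (e t - 2*π*(m:ℝ))| := by congr 1; ring
        rw [h4]
        exact abs_sub _ _
      have hε2lt1 : ε2 < 1 := lt_of_le_of_lt hε2le (by norm_num)
      nlinarith [hm, h2, h3]
    rcases lt_abs.mp hbig with hpos | hneg
    · -- e t > π
      have hsub : Set.Icc (0:ℝ) t ⊆ Set.Icc (0:ℝ) 1 :=
        Set.Icc_subset_Icc le_rfl ht.2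
      have hiv := intermediate_value_Icc ht.1 (hec.mono hsub)
      have hπmem : π ∈ Set.Icc (e 0) (e t) := by
        rw [he0]; exact ⟨hπ.le, hpos.le⟩
      obtain ⟨s, hs, hes⟩ := hiv hπmem
      obtain ⟨m', hm'⟩ := hstep s (hsub hs)
      rw [hes] at hm'
      have := pi2_int_ge m'
      have hε2lt1 : ε2 < 1 := lt_of_le_of_lt hε2le (by norm_num)
      nlinarith [hm', this]
    · -- e t < -π
      have hsub : Set.Icc (0:ℝ) t ⊆ Set.Icc (0:ℝ) 1 :=
        Set.Icc_subset_Icc le_rfl ht.2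
      have hiv := intermediate_value_Icc' ht.1 (hec.mono hsub)
      have hπmem : -π ∈ Set.Icc (e t) (e 0) := by
        rw [he0]
        constructor
        · linarith [hneg]
        · linarith [hπ]
      obtain ⟨s, hs, hes⟩ := hiv hπmem
      obtain ⟨m', hm'⟩ := hstep s (hsub hs)
      rw [hes] at hm'
      have := pi2_int_ge' m'
      have hε2lt1 : ε2 < 1 := lt_of_le_of_lt hε2le (by norm_num)
      nlinarith [hm', this]
  -- conclude
  have he1 : |e 1| ≤ π * ε2 := hclaim 1 one_mem_Icc
  have hWdiff : W x y - W x0 y0 = e 1 / (2*π) := by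
    rw [hWq, hWp, hedef, hddef]
    field_simp
    ring
  rw [Real.dist_eq, hWdiff]
  rw [abs_div, abs_of_pos (by positivity : (0:ℝ) < 2*π)]
  have : |e 1| / (2*π) ≤ ε2 / 2 := by
    rw [div_le_div_iff₀ (by positivity) (by norm_num)]
    nlinarith [he1]
  have hfin : ε2 / 2 < ε := by
    have : min ε 1 ≤ ε := min_le_left _ _
    rw [hε2def]; linarith
  linarith



set_option maxHeartbeats 1000000 in
lemma bound_on_convex (W : ℂ → ℂ → ℝ) (hW : IsWinding I.ft W)
    (S : Set (ℂ × ℂ)) (hconv : Convex ℝ S)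
    (hsub : S ⊆ Pset)
    (w : ℂ) (hw : w ≠ 0)
    (hH : ∀ q ∈ S, 0 < ((I.ft 1 q.2 - I.ft 1 q.1) * (starRingEnd ℂ) (q.2 - q.1)
        * (starRingEnd ℂ) w).re)
    {p0 : ℂ × ℂ} (hp0 : p0 ∈ S) :
    ∀ q ∈ S, |W q.1 q.2| ≤ |W p0.1 p0.2| + 1 := by
  have hπ := Real.pi_pos
  set g : ℂ × ℂ → ℝ := fun q =>
    (Complex.arg ((I.ft 1 q.2 - I.ft 1 q.1) * (starRingEnd ℂ) (q.2 - q.1) * (starRingEnd ℂ) w)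
      + Complex.arg w) / (2*π) with hgdef
  set k : ℂ × ℂ → ℝ := fun q => W q.1 q.2 - g q with hkdef
  have hint : ∀ q ∈ S, ∃ m : ℤ, k q = m := by
    intro q hq
    obtain ⟨hq1, hq2, hq3⟩ := hsub hq
    obtain ⟨m, hm⟩ := winding_mod I W hW hq1 hq2 hq3 w hw
    refine ⟨m, ?_⟩
    have h2π : (2*π:ℝ) ≠ 0 := by positivity
    apply mul_left_cancel₀ h2π
    have hk : k q = W q.1 q.2 - (Complex.arg ((I.ft 1 q.2 - I.ft 1 q.1)
        * (starRingEnd ℂ) (q.2 - q.1) * (starRingEnd ℂ) w) + Complex.arg w) / (2*π) := rfl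
    rw [hk, mul_sub, mul_comm (2*π:ℝ) ((Complex.arg ((I.ft 1 q.2 - I.ft 1 q.1)
        * (starRingEnd ℂ) (q.2 - q.1) * (starRingEnd ℂ) w) + Complex.arg w) / (2*π)),
      div_mul_cancel₀ _ h2π]
    linarith [hm]
  -- continuity of k on S
  have hNc : Continuous (fun q : ℂ × ℂ =>
      (I.ft 1 q.2 - I.ft 1 q.1) * (starRingEnd ℂ) (q.2 - q.1) * (starRingEnd ℂ) w) := by
    have hfc : Continuous (I.ft 1) := (f_contDiff I).continuous
    have hconjc : Continuous (starRingEnd ℂ) := Complex.continuous_conj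
    exact (((hfc.comp continuous_snd).sub (hfc.comp continuous_fst)).mul
      (hconjc.comp (continuous_snd.sub continuous_fst))).mul continuous_const
  have hargc : ContinuousOn (fun q : ℂ × ℂ =>
      Complex.arg ((I.ft 1 q.2 - I.ft 1 q.1) * (starRingEnd ℂ) (q.2 - q.1)
        * (starRingEnd ℂ) w)) S := by
    intro q hq
    apply ContinuousAt.continuousWithinAt
    apply (Complex.continuousAt_arg _).comp hNc.continuousAt
    exact Or.inl (hH q hq)
  have hkc : ContinuousOn k S := by
    apply ContinuousOn.sub
    · exact (W_continuousOn I W hW).mono hsub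
    · rw [hgdef]
      exact (hargc.add continuousOn_const).div_const _
  -- k is constant on S
  have hconst : ∀ q ∈ S, k q = k p0 := by
    intro q hq
    by_contra hne
    obtain ⟨m, hm⟩ := hint q hq
    obtain ⟨m0, hm0⟩ := hint p0 hp0
    rcases lt_trichotomy (k p0) (k q) with hlt | heq | hgt
    · have hmm : m0 < m := by
        rw [hm, hm0] at hlt; exact_mod_cast hlt
      have hc : ((m0:ℝ) + 1/2) ∈ Set.Icc (k p0) (k q) := by
        rw [hm, hm0]
        constructor
        · linarith
        · push_cast
          have : (m0:ℝ) + 1 ≤ m := by exact_mod_cast hmm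
          linarith
      obtain ⟨q', hq', hq'c⟩ := (hconv.isPreconnected.intermediate_value hp0 hq hkc) hc
      obtain ⟨m', hm'⟩ := hint q' hq'
      rw [hm'] at hq'c
      have : 2*(m':ℝ) = 2*(m0:ℝ) + 1 := by linarith [hq'c]
      have : 2*m' = 2*m0 + 1 := by exact_mod_cast this
      omega
    · exact hne (by linarith [heq])
    · have hmm : m < m0 := by
        rw [hm, hm0] at hgt; exact_mod_cast hgt
      have hc : ((m:ℝ) + 1/2) ∈ Set.Icc (k q) (k p0) := by
        rw [hm, hm0]
        constructor
        · linarith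
        · push_cast
          have : (m:ℝ) + 1 ≤ m0 := by exact_mod_cast hmm
          linarith
      obtain ⟨q', hq', hq'c⟩ := (hconv.isPreconnected.intermediate_value hq hp0 hkc) hc
      obtain ⟨m', hm'⟩ := hint q' hq'
      rw [hm'] at hq'c
      have : 2*(m':ℝ) = 2*(m:ℝ) + 1 := by linarith [hq'c]
      have : 2*m' = 2*m + 1 := by exact_mod_cast this
      omega
  intro q hq
  have hkq := hconst q hq
  have hWdiff : W q.1 q.2 - W p0.1 p0.2 = g q - g p0 := by
    rw [hkdef] at hkq
    simp only at hkq
    linarith [hkq]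
  have hargb : ∀ q' ∈ S, |Complex.arg ((I.ft 1 q'.2 - I.ft 1 q'.1)
      * (starRingEnd ℂ) (q'.2 - q'.1) * (starRingEnd ℂ) w)| ≤ π/2 := by
    intro q' hq'
    rw [Complex.abs_arg_le_pi_div_two_iff]
    exact (hH q' hq').le
  have hgb : |g q - g p0| ≤ 1/2 := by
    have h1 := hargb q hq
    have h2 := hargb p0 hp0
    have hgq : g q - g p0 = (Complex.arg ((I.ft 1 q.2 - I.ft 1 q.1)
          * (starRingEnd ℂ) (q.2 - q.1) * (starRingEnd ℂ) w)
        - Complex.arg ((I.ft 1 p0.2 - I.ft 1 p0.1)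
          * (starRingEnd ℂ) (p0.2 - p0.1) * (starRingEnd ℂ) w)) / (2*π) := by
      show (Complex.arg ((I.ft 1 q.2 - I.ft 1 q.1)
            * (starRingEnd ℂ) (q.2 - q.1) * (starRingEnd ℂ) w) + Complex.arg w) / (2*π)
          - (Complex.arg ((I.ft 1 p0.2 - I.ft 1 p0.1)
            * (starRingEnd ℂ) (p0.2 - p0.1) * (starRingEnd ℂ) w) + Complex.arg w) / (2*π) = _
      ring
    rw [hgq, abs_div, abs_of_pos (by positivity : (0:ℝ) < 2*π)]
    rw [div_le_iff₀ (by positivity : (0:ℝ) < 2*π)]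
    calc |Complex.arg ((I.ft 1 q.2 - I.ft 1 q.1)
          * (starRingEnd ℂ) (q.2 - q.1) * (starRingEnd ℂ) w)
        - Complex.arg ((I.ft 1 p0.2 - I.ft 1 p0.1)
          * (starRingEnd ℂ) (p0.2 - p0.1) * (starRingEnd ℂ) w)|
        ≤ |Complex.arg ((I.ft 1 q.2 - I.ft 1 q.1)
          * (starRingEnd ℂ) (q.2 - q.1) * (starRingEnd ℂ) w)|
          + |Complex.arg ((I.ft 1 p0.2 - I.ft 1 p0.1)
          * (starRingEnd ℂ) (p0.2 - p0.1) * (starRingEnd ℂ) w)| := abs_sub _ _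
      _ ≤ π/2 + π/2 := add_le_add h1 h2
      _ = 1/2 * (2*π) := by ring
  have htri : |W q.1 q.2| ≤ |W p0.1 p0.2| + |W q.1 q.2 - W p0.1 p0.2| := by
    have h4 : |W q.1 q.2| = |W p0.1 p0.2 + (W q.1 q.2 - W p0.1 p0.2)| := by congr 1; ring
    rw [h4]; exact abs_add_le _ _
  calc |W q.1 q.2| ≤ |W p0.1 p0.2| + |W q.1 q.2 - W p0.1 p0.2| := htri
    _ ≤ |W p0.1 p0.2| + 1 := by
        rw [hWdiff]
        linarith [hgb]

lemma re_mul_conj (z j : ℂ) : (z * (starRingEnd ℂ) j).re = z.re * j.re + z.im * j.im := by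
  simp [Complex.mul_re, Complex.conj_re, Complex.conj_im]

lemma norm_sq_complex (z : ℂ) : ‖z‖^2 = z.re^2 + z.im^2 := by
  rw [Complex.sq_norm, Complex.normSq_apply]; ring

lemma norm_sub_sq_unit (u j : ℂ) (hu : ‖u‖ = 1) (hj : ‖j‖ = 1) :
    ‖u - j‖^2 = 2 - 2*(u * (starRingEnd ℂ) j).re := by
  have hu2 := norm_sq_complex u
  have hj2 := norm_sq_complex j
  rw [hu] at hu2; rw [hj] at hj2
  rw [norm_sq_complex, re_mul_conj]
  simp only [Complex.sub_re, Complex.sub_im]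
  nlinarith [hu2, hj2]

lemma cone_convex (κ : ℝ) (hκ : 0 ≤ κ) (j : ℂ) :
    Convex ℝ {v : ℂ | κ * ‖v‖ < (v * (starRingEnd ℂ) j).re} := by
  intro v hv v' hv' a b ha hb hab
  simp only [Set.mem_setOf_eq] at hv hv' ⊢
  have hre : ((a • v + b • v') * (starRingEnd ℂ) j).re
      = a * (v * (starRingEnd ℂ) j).re + b * (v' * (starRingEnd ℂ) j).re := by
    rw [re_mul_conj, re_mul_conj, re_mul_conj]
    simp only [Complex.add_re, Complex.add_im, Complex.smul_re, Complex.smul_im,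
      smul_eq_mul]
    ring
  have hnorm : ‖a • v + b • v'‖ ≤ a * ‖v‖ + b * ‖v'‖ := by
    calc ‖a • v + b • v'‖ ≤ ‖a • v‖ + ‖b • v'‖ := norm_add_le _ _
      _ = |a| * ‖v‖ + |b| * ‖v'‖ := by rw [norm_smul, norm_smul, Real.norm_eq_abs, Real.norm_eq_abs]
      _ = a * ‖v‖ + b * ‖v'‖ := by rw [_root_.abs_of_nonneg ha, _root_.abs_of_nonneg hb]
  rw [hre]
  rcases eq_or_lt_of_le ha with ha0 | hapos
  · have hb1 : b = 1 := by linarith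
    rw [← ha0, hb1, zero_smul, one_smul, zero_add, zero_mul, one_mul, zero_add]
    exact hv'
  · have h1 : κ * ‖a • v + b • v'‖ ≤ a * (κ * ‖v‖) + b * (κ * ‖v'‖) := by
      nlinarith [hnorm]
    have h2 : a * (κ * ‖v‖) < a * (v * (starRingEnd ℂ) j).re := by nlinarith [hv]
    have h3 : b * (κ * ‖v'‖) ≤ b * (v' * (starRingEnd ℂ) j).re := by nlinarith [hv']
    linarith

lemma cone_ne_zero {κ : ℝ} (hκ : 0 ≤ κ) {j v : ℂ}
    (hv : κ * ‖v‖ < (v * (starRingEnd ℂ) j).re) : v ≠ 0 := by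
  intro h
  rw [h] at hv
  simp at hv

lemma ofReal_mul_re' (a : ℝ) (z : ℂ) : ((a:ℂ) * z).re = a * z.re := by
  simp [Complex.mul_re]

set_option maxHeartbeats 2000000 in
lemma loc_bdd (W : ℂ → ℂ → ℝ) (hW : IsWinding I.ft W) (x0 y0 : ℂ)
    (hx0 : x0 ∈ Disk) (hy0 : y0 ∈ Disk) :
    ∃ V : Set (ℂ × ℂ), V ∈ 𝓝 (x0, y0) ∧ ∃ M : ℝ,
      ∀ q ∈ V, q ∈ Pset → |W q.1 q.2| ≤ M := by
  have hπ := Real.pi_pos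
  have hfc : Continuous (I.ft 1) := (f_contDiff I).continuous
  have hconjc : Continuous (starRingEnd ℂ) := Complex.continuous_conj
  have hNtc : Continuous (fun q : ℂ × ℂ =>
      (I.ft 1 q.2 - I.ft 1 q.1) * (starRingEnd ℂ) (q.2 - q.1)) :=
    ((hfc.comp continuous_snd).sub (hfc.comp continuous_fst)).mul
      (hconjc.comp (continuous_snd.sub continuous_fst))
  have hDiskConv : Convex ℝ Disk := convex_closedBall _ _
  rcases ne_or_eq x0 y0 with hneq | hdiag
  · -- off-diagonal case
    set w0 : ℂ := (I.ft 1 y0 - I.ft 1 x0) * (starRingEnd ℂ) (y0 - x0) with hw0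
    have hBne : y0 - x0 ≠ 0 := sub_ne_zero.mpr (Ne.symm hneq)
    have hAne : I.ft 1 y0 - I.ft 1 x0 ≠ 0 :=
      sub_ne_zero.mpr ((f_injOn I).ne hy0 hx0 (Ne.symm hneq))
    have hw0ne : w0 ≠ 0 := mul_ne_zero hAne (conj_ne_zero' hBne)
    have hcontre : ContinuousAt (fun q : ℂ × ℂ =>
        ((I.ft 1 q.2 - I.ft 1 q.1) * (starRingEnd ℂ) (q.2 - q.1)
          * (starRingEnd ℂ) w0).re) (x0, y0) :=
      (Complex.continuous_re.comp (hNtc.mul continuous_const)).continuousAt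
    have hpos : 0 < ((I.ft 1 (x0, y0).2 - I.ft 1 (x0, y0).1)
        * (starRingEnd ℂ) ((x0, y0).2 - (x0, y0).1) * (starRingEnd ℂ) w0).re := by
      show 0 < (w0 * (starRingEnd ℂ) w0).re
      rw [Complex.mul_conj, Complex.ofReal_re]
      exact Complex.normSq_pos.mpr hw0ne
    have hev := hcontre.preimage_mem_nhds (Ioi_mem_nhds hpos)
    obtain ⟨δ, hδpos, hδsub⟩ := Metric.mem_nhds_iff.mp hev
    have hd12 : 0 < dist x0 y0 := dist_pos.mpr hneq
    set δ2 : ℝ := min δ (dist x0 y0 / 2) with hδ2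
    have hδ2pos : 0 < δ2 := lt_min hδpos (by linarith)
    set S : Set (ℂ × ℂ) := Metric.ball (x0, y0) δ2 ∩ (Disk ×ˢ Disk) with hSdef
    have hSconv : Convex ℝ S := (convex_ball _ _).inter (hDiskConv.prod hDiskConv)
    have hSP : S ⊆ Pset := by
      rintro ⟨x, y⟩ ⟨hball, hx, hy⟩
      refine ⟨hx, hy, ?_⟩
      rw [Metric.mem_ball, Prod.dist_eq, max_lt_iff] at hball
      obtain ⟨hb1, hb2⟩ := hball
      intro hxy
      simp only at hb1 hb2 hxy
      rw [hxy] at hb1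
      have h4 : dist x0 y0 ≤ dist x0 y + dist y y0 := dist_triangle _ _ _
      rw [dist_comm] at hb1
      have h5 : δ2 ≤ dist x0 y0 / 2 := min_le_right _ _
      have hb2' : dist y y0 < δ2 := hb2
      linarith
    have hH : ∀ q ∈ S, 0 < ((I.ft 1 q.2 - I.ft 1 q.1) * (starRingEnd ℂ) (q.2 - q.1)
        * (starRingEnd ℂ) w0).re := by
      intro q hq
      apply hδsub
      exact Metric.mem_ball.mpr (lt_of_lt_of_le (Metric.mem_ball.mp hq.1) (min_le_left _ _))
    have hp0S : (x0, y0) ∈ S := ⟨Metric.mem_ball_self hδ2pos, hx0, hy0⟩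
    have hbound := bound_on_convex I W hW S hSconv hSP w0 hw0ne hH hp0S
    refine ⟨Metric.ball (x0, y0) δ2, Metric.ball_mem_nhds _ hδ2pos, |W x0 y0| + 1, ?_⟩
    intro q hq hqP
    exact hbound q ⟨hq, hqP.1, hqP.2.1⟩
  · -- diagonal case
    subst hdiag
    have key : ∀ u0 : ℂ, ∃ δu : ℝ, 0 < δu ∧ δu ≤ 1 ∧ (‖u0‖ = 1 →
        ∀ p : ℂ × ℂ × ℝ, dist p (x0, (u0, 0)) < δu →
          0 < (Nmap I p * (starRingEnd ℂ) (Nmap I (x0, (u0, 0)))).re) := by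
      intro u0
      by_cases hu0 : ‖u0‖ = 1
      · have hu0ne : u0 ≠ 0 := by
          intro h; rw [h, norm_zero] at hu0; norm_num at hu0
        have hwne : Nmap I (x0, (u0, 0)) ≠ 0 := by
          unfold Nmap
          rw [Jmap_zero]
          exact mul_ne_zero (fderiv_ne_zero I x0 hx0 u0 hu0ne) (conj_ne_zero' hu0ne)
        have hNAc : ContinuousAt (fun p : ℂ × ℂ × ℝ =>
            (Nmap I p * (starRingEnd ℂ) (Nmap I (x0, (u0, 0)))).re) (x0, (u0, 0)) := by
          apply Complex.continuous_re.continuousAt.comp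
          apply ContinuousAt.mul
          · exact (Jmap_contAt I x0 u0).mul
              ((hconjc.comp (continuous_fst.comp continuous_snd)).continuousAt)
          · exact continuousAt_const
        have hpos : 0 < (Nmap I (x0, (u0, 0))
            * (starRingEnd ℂ) (Nmap I (x0, (u0, 0)))).re := by
          rw [Complex.mul_conj, Complex.ofReal_re]
          exact Complex.normSq_pos.mpr hwne
        have hev := hNAc.preimage_mem_nhds (Ioi_mem_nhds hpos)
        obtain ⟨δ, hδpos, hδsub⟩ := Metric.mem_nhds_iff.mp hev
        refine ⟨min δ 1, lt_min hδpos one_pos, min_le_right _ _, fun _ p hp => ?_⟩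
        exact hδsub (Metric.mem_ball.mpr (lt_of_lt_of_le hp (min_le_left _ _)))
      · exact ⟨1, one_pos, le_rfl, fun h => absurd h hu0⟩
    choose δf hδfpos hδfle1 hδfkey using key
    have hsph : IsCompact (Metric.sphere (0:ℂ) 1) := isCompact_sphere _ _
    obtain ⟨t, htsub, hcov⟩ := hsph.elim_nhds_subcover
      (fun u => Metric.ball u (δf u / 2))
      (fun u _ => Metric.ball_mem_nhds _ (half_pos (hδfpos u)))
    have htne : t.Nonempty := by
      rcases Finset.eq_empty_or_nonempty t with h | h
      · exfalso
        have h1 : (1:ℂ) ∈ Metric.sphere (0:ℂ) 1 := by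
          rw [mem_sphere_zero_iff_norm]; exact norm_one
        have h2 := hcov h1
        rw [h] at h2
        simp at h2
      · exact h
    set δ' : ℝ := t.inf' htne (fun u => δf u / 2) with hδ'
    have hδ'pos : 0 < δ' := by
      rw [hδ', Finset.lt_inf'_iff]
      exact fun u _ => half_pos (hδfpos u)
    have hδ'le : ∀ j ∈ t, δ' ≤ δf j / 2 := fun j hj => Finset.inf'_le _ hj
    set Sset : ℂ → Set (ℂ × ℂ) := fun j =>
      (Prod.fst ⁻¹' Disk) ∩ (Prod.snd ⁻¹' Disk) ∩ (Prod.fst ⁻¹' Metric.ball x0 (δf j))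
        ∩ ((fun q : ℂ × ℂ => q.2 - q.1) ⁻¹' Metric.ball 0 δ')
        ∩ ((fun q : ℂ × ℂ => q.2 - q.1) ⁻¹'
            {v : ℂ | (1 - (δf j)^2/8) * ‖v‖ < (v * (starRingEnd ℂ) j).re}) with hSset
    have hlinfst : IsLinearMap ℝ (Prod.fst : ℂ × ℂ → ℂ) := ⟨fun _ _ => rfl, fun _ _ => rfl⟩
    have hlinsnd : IsLinearMap ℝ (Prod.snd : ℂ × ℂ → ℂ) := ⟨fun _ _ => rfl, fun _ _ => rfl⟩
    have hlinsub : IsLinearMap ℝ (fun q : ℂ × ℂ => q.2 - q.1) := by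
      constructor
      · intro a b; simp [Prod.snd_add, Prod.fst_add]; ring
      · intro c a; simp [Prod.smul_fst, Prod.smul_snd, smul_sub]
    have hκ : ∀ j : ℂ, (0:ℝ) ≤ 1 - (δf j)^2/8 := by
      intro j
      have h1 := hδfpos j
      have h2 := hδfle1 j
      nlinarith
    have hSconv : ∀ j : ℂ, Convex ℝ (Sset j) := by
      intro j
      exact ((((hDiskConv.is_linear_preimage hlinfst).inter
        (hDiskConv.is_linear_preimage hlinsnd)).inter
        ((convex_ball _ _).is_linear_preimage hlinfst)).inter
        ((convex_ball _ _).is_linear_preimage hlinsub)).inter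
        ((cone_convex _ (hκ j) j).is_linear_preimage hlinsub)
    have hSsub : ∀ j : ℂ, Sset j ⊆ Pset := by
      rintro j q ⟨⟨⟨⟨hq1, hq2⟩, _⟩, _⟩, hq5⟩
      refine ⟨hq1, hq2, ?_⟩
      have hvne : q.2 - q.1 ≠ 0 := cone_ne_zero (hκ j) hq5
      intro h
      apply hvne
      rw [h, sub_self]
    have hH : ∀ j ∈ t, ∀ q ∈ Sset j,
        0 < ((I.ft 1 q.2 - I.ft 1 q.1) * (starRingEnd ℂ) (q.2 - q.1)
          * (starRingEnd ℂ) (Nmap I (x0, (j, 0)))).re := by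
      rintro j hj q ⟨⟨⟨⟨hq1, hq2⟩, hq3⟩, hq4⟩, hq5⟩
      simp only [Set.mem_preimage, Set.mem_setOf_eq, Metric.mem_ball,
        mem_ball_zero_iff] at hq3 hq4 hq5
      rw [dist_eq_norm, sub_zero] at hq4
      have hvne : q.2 - q.1 ≠ 0 := cone_ne_zero (hκ j) hq5
      have hr : 0 < ‖q.2 - q.1‖ := norm_pos_iff.mpr hvne
      have hcast : ((‖q.2 - q.1‖:ℝ):ℂ) ≠ 0 := by exact_mod_cast hr.ne'
      have hunorm : ‖(q.2 - q.1) / ((‖q.2 - q.1‖:ℝ):ℂ)‖ = 1 := by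
        rw [norm_div, Complex.norm_real, Real.norm_eq_abs, _root_.abs_of_pos hr,
          div_self hr.ne']
      have hjnorm : ‖j‖ = 1 := mem_sphere_zero_iff_norm.mp (htsub j hj)
      have hveq : q.2 - q.1 = ((‖q.2 - q.1‖:ℝ):ℂ) * ((q.2 - q.1) / ((‖q.2 - q.1‖:ℝ):ℂ)) := by
        rw [mul_comm]
        exact (div_mul_cancel₀ _ hcast).symm
      have hre_v : ((q.2 - q.1) * (starRingEnd ℂ) j).re
          = ‖q.2 - q.1‖ * (((q.2 - q.1) / ((‖q.2 - q.1‖:ℝ):ℂ)) * (starRingEnd ℂ) j).re := by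
        conv_lhs => rw [hveq]
        rw [mul_assoc, ofReal_mul_re']
      have hre_u : (1 - (δf j)^2/8)
          < (((q.2 - q.1) / ((‖q.2 - q.1‖:ℝ):ℂ)) * (starRingEnd ℂ) j).re := by
        rw [hre_v] at hq5
        nlinarith [hq5, hr]
      have hudist : ‖(q.2 - q.1) / ((‖q.2 - q.1‖:ℝ):ℂ) - j‖ < δf j / 2 := by
        have hsq := norm_sub_sq_unit _ j hunorm hjnorm
        by_contra hcon
        push_neg at hcon
        have h8 : (δf j/2)^2 ≤ ‖(q.2 - q.1) / ((‖q.2 - q.1‖:ℝ):ℂ) - j‖^2 := by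
          nlinarith [norm_nonneg ((q.2 - q.1) / ((‖q.2 - q.1‖:ℝ):ℂ) - j), hδfpos j]
        nlinarith [hre_u, hδfpos j, hsq]
      have hp : dist ((q.1, ((q.2 - q.1) / ((‖q.2 - q.1‖:ℝ):ℂ), ‖q.2 - q.1‖)) : ℂ × ℂ × ℝ)
          (x0, (j, 0)) < δf j := by
        rw [Prod.dist_eq, Prod.dist_eq]
        apply max_lt
        · exact lt_of_lt_of_le hq3 le_rfl
        · apply max_lt
          · rw [dist_eq_norm]
            have := hδfpos j
            linarith [hudist]
          · rw [Real.dist_eq, sub_zero, _root_.abs_of_pos hr]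
            have h9 := hδ'le j hj
            have := hδfpos j
            linarith [hq4]
      have hNpos := hδfkey j hjnorm _ hp
      have hNt := Ntilde_eq I q.1 (q.2 - q.1) hvne
      have h5 : q.1 + (q.2 - q.1) = q.2 := by ring
      rw [h5] at hNt
      rw [hNt, smul_mul_assoc, Complex.real_smul, ofReal_mul_re']
      exact mul_pos (by positivity) hNpos
    have hSb : ∀ j : ℂ, ∃ M : ℝ, j ∈ t → ∀ q ∈ Sset j, |W q.1 q.2| ≤ M := by
      intro j
      by_cases hj : j ∈ t
      · rcases Set.eq_empty_or_nonempty (Sset j) with hemp | ⟨pj, hpj⟩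
        · exact ⟨0, fun _ q hq => absurd (hemp ▸ hq) (Set.notMem_empty q)⟩
        · have hjnorm : ‖j‖ = 1 := mem_sphere_zero_iff_norm.mp (htsub j hj)
          have hjne : j ≠ 0 := by
            intro h; rw [h, norm_zero] at hjnorm; norm_num at hjnorm
          have hwne : Nmap I (x0, (j, 0)) ≠ 0 := by
            unfold Nmap
            rw [Jmap_zero]
            exact mul_ne_zero (fderiv_ne_zero I x0 hx0 j hjne) (conj_ne_zero' hjne)
          exact ⟨|W pj.1 pj.2| + 1, fun _ =>
            bound_on_convex I W hW (Sset j) (hSconv j) (hSsub j) _ hwne (hH j hj) hpj⟩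
      · exact ⟨0, fun h => absurd h hj⟩
    choose Mf hMf using hSb
    refine ⟨Metric.ball (x0, x0) (δ'/2), Metric.ball_mem_nhds _ (by positivity),
      ∑ j ∈ t, |Mf j|, ?_⟩
    rintro ⟨x, y⟩ hqV ⟨hx, hy, hxy⟩
    simp only at hx hy hxy
    have hvne : y - x ≠ 0 := sub_ne_zero.mpr (Ne.symm hxy)
    have hr : 0 < ‖y - x‖ := norm_pos_iff.mpr hvne
    have hcast : ((‖y - x‖:ℝ):ℂ) ≠ 0 := by exact_mod_cast hr.ne'
    have hunorm : ‖(y - x) / ((‖y - x‖:ℝ):ℂ)‖ = 1 := by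
      rw [norm_div, Complex.norm_real, Real.norm_eq_abs, _root_.abs_of_pos hr,
        div_self hr.ne']
    have husph : (y - x) / ((‖y - x‖:ℝ):ℂ) ∈ Metric.sphere (0:ℂ) 1 := by
      rw [mem_sphere_zero_iff_norm]; exact hunorm
    have hcov2 := hcov husph
    rw [Set.mem_iUnion₂] at hcov2
    obtain ⟨j, hj, hjb⟩ := hcov2
    rw [Metric.mem_ball] at hjb
    rw [Metric.mem_ball, Prod.dist_eq, max_lt_iff] at hqV
    obtain ⟨hqx, hqy⟩ := hqV
    simp only at hqx hqy
    have hjnorm : ‖j‖ = 1 := mem_sphere_zero_iff_norm.mp (htsub j hj)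
    have hvlt : ‖y - x‖ < δ' := by
      have h1 : dist y x ≤ dist y x0 + dist x0 x := dist_triangle _ _ _
      rw [dist_comm x0 x] at h1
      rw [← dist_eq_norm]
      linarith [hqx, hqy, h1]
    have hudist : ‖(y - x) / ((‖y - x‖:ℝ):ℂ) - j‖ < δf j / 2 := by
      rw [dist_eq_norm] at hjb; exact hjb
    have hre_u : (1 - (δf j)^2/8)
        < (((y - x) / ((‖y - x‖:ℝ):ℂ)) * (starRingEnd ℂ) j).re := by
      have hsq := norm_sub_sq_unit _ j hunorm hjnorm
      nlinarith [hudist, norm_nonneg ((y - x) / ((‖y - x‖:ℝ):ℂ) - j), hδfpos j]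
    have hveq : y - x = ((‖y - x‖:ℝ):ℂ) * ((y - x) / ((‖y - x‖:ℝ):ℂ)) := by
      rw [mul_comm]
      exact (div_mul_cancel₀ _ hcast).symm
    have hre_v : ((y - x) * (starRingEnd ℂ) j).re
        = ‖y - x‖ * (((y - x) / ((‖y - x‖:ℝ):ℂ)) * (starRingEnd ℂ) j).re := by
      conv_lhs => rw [hveq]
      rw [mul_assoc, ofReal_mul_re']
    have hmem : ((x, y) : ℂ × ℂ) ∈ Sset j := by
      refine ⟨⟨⟨⟨hx, hy⟩, ?_⟩, ?_⟩, ?_⟩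
      · show dist x x0 < δf j
        have h9 := hδ'le j hj
        have := hδfpos j
        linarith [hqx]
      · show y - x ∈ Metric.ball (0:ℂ) δ'
        rw [mem_ball_zero_iff]
        exact hvlt
      · show (1 - (δf j)^2/8) * ‖y - x‖ < ((y - x) * (starRingEnd ℂ) j).re
        rw [hre_v]
        nlinarith [hre_u, hr]
    calc |W x y| ≤ Mf j := hMf j hj (x, y) hmem
      _ ≤ |Mf j| := le_abs_self _
      _ ≤ ∑ j' ∈ t, |Mf j'| := Finset.single_le_sum (f := fun j' => |Mf j'|)
        (fun i _ => abs_nonneg (Mf i)) hj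

end Isotopy

/-- The winding number `W_{f̃}` of an area-preserving isotopy of the
disk ending at a `C¹` diffeomorphism is bounded on `(𝔻 × 𝔻) ∖ Δ`. -/
theorem stmt_4 (I : DiskIsotopy)
    (W : ℂ → ℂ → ℝ) (hW : IsWinding I.ft W) :
    ∃ C : ℝ, ∀ x ∈ Disk, ∀ y ∈ Disk, x ≠ y → |W x y| ≤ C := by
  have hK : IsCompact (Disk ×ˢ Disk) :=
    (isCompact_closedBall _ _).prod (isCompact_closedBall _ _)
  have hloc : ∀ p : ℂ × ℂ, ∃ V : Set (ℂ × ℂ), ∃ M : ℝ,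
      p ∈ Disk ×ˢ Disk → (V ∈ 𝓝 p ∧ ∀ q ∈ V, q ∈ Pset → |W q.1 q.2| ≤ M) := by
    intro p
    by_cases hp : p ∈ Disk ×ˢ Disk
    · obtain ⟨V, hV, M, hM⟩ := loc_bdd I W hW p.1 p.2 hp.1 hp.2
      exact ⟨V, M, fun _ => ⟨hV, hM⟩⟩
    · exact ⟨Set.univ, 0, fun h => absurd h hp⟩
  choose Vf Mf hVM using hloc
  obtain ⟨t, hts, hcov⟩ := hK.elim_nhds_subcover Vf (fun p hp => (hVM p hp).1)
  refine ⟨∑ p ∈ t, |Mf p|, ?_⟩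
  intro x hx y hy hxy
  have hq : ((x, y) : ℂ × ℂ) ∈ Disk ×ˢ Disk := ⟨hx, hy⟩
  have hmem := hcov hq
  rw [Set.mem_iUnion₂] at hmem
  obtain ⟨p, hpt, hpV⟩ := hmem
  have hb := (hVM p (hts p hpt)).2 (x, y) hpV ⟨hx, hy, hxy⟩
  calc |W x y| ≤ Mf p := hb
    _ ≤ |Mf p| := le_abs_self _
    _ ≤ ∑ p' ∈ t, |Mf p'| := Finset.single_le_sum (f := fun p' => |Mf p'|)
        (fun i _ => abs_nonneg _) hpt
end
end

section
/- Let f̃ = (f_t)_{t∈[0,1]} be an area-preserving isotopy from id to a C¹ diffeomorphism f of 𝔻, where each f_t is C¹ and (t,x) ↦ D(f_t)_x is jointly continuous. Let (x_n, y_n) be a sequence of pairs of distinct points of 𝔻 such that x_n → x, y_n → x, and the unit vectors (y_n − x_n)/|y_n − x_n| converge to a unit vector ξ. Then W_{f̃}(x_n, y_n) converges to w_{f̃}(x, ξ), the variation over t ∈ [0,1] of the angle of D(f_t)_x(ξ), divided by 2π. -/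
open MeasureTheory Metric Set Filter Topology
open scoped Real ENNReal

noncomputable section

-- L1
lemma norm_exp_I_sub_one (a : ℝ) :
    ‖Complex.exp ((a:ℂ) * Complex.I) - 1‖ = 2 * |Real.sin (a/2)| := by
  have h1 : Complex.exp ((a:ℂ) * Complex.I) - 1
      = Complex.ofReal (Real.cos a - 1) + Complex.ofReal (Real.sin a) * Complex.I := by
    rw [Complex.exp_mul_I]
    push_cast
    ring
  have h2 : ‖Complex.exp ((a:ℂ) * Complex.I) - 1‖^2 = (Real.cos a - 1)^2 + (Real.sin a)^2 := by
    rw [h1, Complex.sq_norm, Complex.normSq_apply]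
    simp [Complex.cos_ofReal_re, Complex.sin_ofReal_re]
    ring
  have h3 : (2 * |Real.sin (a/2)|)^2 = (Real.cos a - 1)^2 + (Real.sin a)^2 := by
    have hs := Real.sin_sq_eq_half_sub (a/2)
    have hh : 2 * (a/2) = a := by ring
    rw [hh] at hs
    have hpyth := Real.sin_sq_add_cos_sq a
    have : |Real.sin (a/2)|^2 = Real.sin (a/2)^2 := sq_abs _
    nlinarith
  have h4 : ‖Complex.exp ((a:ℂ) * Complex.I) - 1‖^2 = (2 * |Real.sin (a/2)|)^2 := by
    rw [h2, h3]
  have hn : (0:ℝ) ≤ ‖Complex.exp ((a:ℂ) * Complex.I) - 1‖ := norm_nonneg _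
  have hm : (0:ℝ) ≤ 2 * |Real.sin (a/2)| := by positivity
  nlinarith [h4]

lemma norm_exp_I_sub_exp_I (a b : ℝ) :
    ‖Complex.exp ((a:ℂ) * Complex.I) - Complex.exp ((b:ℂ) * Complex.I)‖
      = 2 * |Real.sin ((a - b)/2)| := by
  have hfac : Complex.exp ((a:ℂ) * Complex.I) - Complex.exp ((b:ℂ) * Complex.I)
      = Complex.exp ((b:ℂ) * Complex.I) * (Complex.exp (((a - b : ℝ):ℂ) * Complex.I) - 1) := by
    rw [mul_sub, ← Complex.exp_add, mul_one]
    push_cast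
    ring_nf
  rw [hfac, norm_mul, Complex.norm_exp_ofReal_mul_I, one_mul,
    norm_exp_I_sub_one]

-- L2'
lemma dist_int_of_sin_small (a ε : ℝ) (h : 2 * |Real.sin (a/2)| ≤ ε) :
    ∃ k : ℤ, |a - 2*π*k| ≤ 2 * Real.arcsin (ε/2) := by
  have hπ := Real.pi_pos
  set k := round (a / (2*π)) with hk
  refine ⟨k, ?_⟩
  have hr : |a / (2*π) - k| ≤ 1/2 := abs_sub_round _
  have hrle : |a - 2*π*k| ≤ π := by
    have h2π : (0:ℝ) < 2*π := by linarith
    have : |a - 2*π*k| = 2*π * |a/(2*π) - k| := by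
      rw [← abs_of_pos h2π, ← abs_mul]
      congr 1
      rw [abs_of_pos h2π]
      field_simp
    rw [this]
    nlinarith [hr]
  set r := a - 2*π*(k:ℝ) with hrdef
  have hsin : |Real.sin (r/2)| = |Real.sin (a/2)| := by
    have : r/2 = a/2 - (k:ℝ) * π := by rw [hrdef]; ring
    rw [this, Real.sin_sub_int_mul_pi, abs_mul]
    have h1 : |((-1:ℝ)) ^ k| = 1 := by
      rcases Int.even_or_odd k with hk' | hk'
      · rw [hk'.neg_one_zpow]; simp
      · rw [hk'.neg_one_zpow]; simp
    rw [h1, one_mul]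
  have hsin2 : |Real.sin (r/2)| ≤ ε/2 := by rw [hsin]; linarith
  -- sin (|r|/2) = |sin (r/2)|
  have habs : Real.sin (|r|/2) = |Real.sin (r/2)| := by
    rcases le_or_gt 0 r with hr0 | hr0
    · rw [abs_of_nonneg hr0, abs_of_nonneg]
      apply Real.sin_nonneg_of_nonneg_of_le_pi <;> nlinarith [abs_of_nonneg hr0, hrle]
    · rw [abs_of_neg hr0]
      have : -r/2 = -(r/2) := by ring
      rw [this, Real.sin_neg, abs_of_nonpos]
      apply Real.sin_nonpos_of_nonpos_of_neg_pi_le <;> nlinarith [abs_of_neg hr0, hrle]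
  have hb1 : -(π/2) ≤ |r|/2 := by
    have := abs_nonneg r
    linarith
  have hb2 : |r|/2 ≤ π/2 := by
    have := abs_nonneg r
    linarith [hrle]
  have heq : |r|/2 = Real.arcsin (Real.sin (|r|/2)) := (Real.arcsin_sin hb1 hb2).symm
  have hle : Real.arcsin (Real.sin (|r|/2)) ≤ Real.arcsin (ε/2) := by
    apply Real.monotone_arcsin
    rw [habs]
    exact hsin2
  have : |r|/2 ≤ Real.arcsin (ε/2) := heq.trans_le hle
  linarith

-- L3 normalization bound
lemma norm_normalize_sub_normalize (a b : ℂ) (η mm : ℝ) (hb : b ≠ 0) (hmm : 0 < mm)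
    (hma : mm ≤ ‖a‖) (hab : ‖a - b‖ ≤ η) :
    ‖a / (‖a‖ : ℂ) - b / (‖b‖ : ℂ)‖ ≤ 2 * η / mm := by
  have ha0 : (0:ℝ) < ‖a‖ := lt_of_lt_of_le hmm hma
  have hb0 : (0:ℝ) < ‖b‖ := norm_pos_iff.mpr hb
  have haC : ((‖a‖ : ℝ) : ℂ) ≠ 0 := by
    simpa using ha0.ne'
  have hbC : ((‖b‖ : ℝ) : ℂ) ≠ 0 := by
    simpa using hb0.ne'
  have key : a / (‖a‖ : ℂ) - b / (‖b‖ : ℂ)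
      = (a - b) / (‖a‖ : ℂ) + (((‖b‖ - ‖a‖ : ℝ)) : ℂ) / (‖a‖ : ℂ) * (b / (‖b‖ : ℂ)) := by
    rw [div_mul_div_comm, div_add_div _ _ haC (mul_ne_zero haC hbC),
      div_sub_div _ _ haC hbC, div_eq_div_iff (mul_ne_zero haC hbC)
        (mul_ne_zero haC (mul_ne_zero haC hbC))]
    push_cast
    ring
  have hnb : ‖b / (‖b‖ : ℂ)‖ = 1 := by
    rw [norm_div, Complex.norm_real, Real.norm_eq_abs, abs_of_pos hb0, div_self hb0.ne']
  have htri : ‖a / (‖a‖ : ℂ) - b / (‖b‖ : ℂ)‖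
      ≤ ‖a - b‖ / ‖a‖ + |‖b‖ - ‖a‖| / ‖a‖ := by
    rw [key]
    refine (norm_add_le _ _).trans ?_
    rw [norm_mul, hnb, mul_one, norm_div, norm_div, Complex.norm_real, Real.norm_eq_abs,
      Complex.norm_real, Real.norm_eq_abs, abs_of_pos ha0]
  have h2 : |‖b‖ - ‖a‖| ≤ η := by
    have := abs_norm_sub_norm_le b a
    rw [norm_sub_rev] at this
    exact this.trans hab
  have h3 : ‖a - b‖ / ‖a‖ ≤ η / mm :=
    div_le_div₀ (le_trans (norm_nonneg _) hab) hab hmm hma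
  have h4 : |‖b‖ - ‖a‖| / ‖a‖ ≤ η / mm :=
    div_le_div₀ (le_trans (abs_nonneg _) h2) h2 hmm hma
  have h5 : 2 * η / mm = η / mm + η / mm := by ring
  linarith

-- division by real = smul
lemma div_real_eq_smul (r : ℝ) (z : ℂ) : z / (r : ℂ) = r⁻¹ • z := by
  rw [Complex.real_smul, div_eq_inv_mul]
  push_cast
  ring

-- scaling invariance of normalization
lemma normalize_smul (r : ℝ) (hr : 0 < r) (z : ℂ) (hz : z ≠ 0) :
    (r • z) / ((‖r • z‖ : ℝ) : ℂ) = z / ((‖z‖ : ℝ) : ℂ) := by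
  have hz0 : (0:ℝ) < ‖z‖ := norm_pos_iff.mpr hz
  have hrC : ((r : ℝ) : ℂ) ≠ 0 := by exact_mod_cast hr.ne'
  have hzC : ((‖z‖ : ℝ) : ℂ) ≠ 0 := by exact_mod_cast hz0.ne'
  rw [norm_smul, Real.norm_eq_abs, abs_of_pos hr, Complex.real_smul]
  push_cast
  field_simp

-- L4: no-jump lemma via IVT
lemma no_jump (g : ℝ → ℝ) (hg : ContinuousOn g (Icc 0 1)) (hg0 : g 0 = 0)
    (c : ℝ) (hc0 : 0 ≤ c) (hc : c < π)
    (h : ∀ t ∈ Icc (0:ℝ) 1, ∃ k : ℤ, |g t - 2*π*k| ≤ c) :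
    ∀ t ∈ Icc (0:ℝ) 1, |g t| ≤ c := by
  have hπ := Real.pi_pos
  have hval : ∀ s ∈ Icc (0:ℝ) 1, |g s| ≠ π := by
    intro s hs hgs
    obtain ⟨k, hk⟩ := h s hs
    have t1 : |2*π*(k:ℝ)| - |g s| ≤ |g s - 2*π*(k:ℝ)| := by
      rw [abs_sub_comm]
      exact abs_sub_abs_le_abs_sub _ _
    rcases eq_or_ne k 0 with h0 | h0
    · rw [h0] at hk
      simp at hk
      rw [hgs] at hk
      linarith
    · have h1 : (1:ℝ) ≤ |(k:ℝ)| := by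
        have := Int.one_le_abs h0
        calc (1:ℝ) ≤ ((|k| : ℤ) : ℝ) := by exact_mod_cast this
          _ = |(k:ℝ)| := by push_cast; rfl
      have h2 : 2*π ≤ |2*π*(k:ℝ)| := by
        rw [abs_mul, abs_of_pos (by linarith : (0:ℝ) < 2*π)]
        nlinarith
      rw [hgs] at t1
      linarith
  intro t ht
  by_contra hcon
  push_neg at hcon
  obtain ⟨k, hk⟩ := h t ht
  have hk0 : k ≠ 0 := by
    intro h0
    rw [h0] at hk
    simp at hk
    linarith
  have habs : π < |g t| := by
    have h1 : (1:ℝ) ≤ |(k:ℝ)| := by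
      have := Int.one_le_abs hk0
      calc (1:ℝ) ≤ ((|k| : ℤ) : ℝ) := by exact_mod_cast this
        _ = |(k:ℝ)| := by push_cast; rfl
    have h2 : 2*π ≤ |2*π*(k:ℝ)| := by
      rw [abs_mul, abs_of_pos (by linarith : (0:ℝ) < 2*π)]
      nlinarith
    have h3 : |2*π*(k:ℝ)| - |g t| ≤ |g t - 2*π*(k:ℝ)| := by
      rw [abs_sub_comm]
      exact abs_sub_abs_le_abs_sub _ _
    linarith [hk]
  have ht0 : (0:ℝ) ≤ t := ht.1
  have hgsub : ContinuousOn g (Icc 0 t) := hg.mono (Icc_subset_Icc le_rfl ht.2)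
  rcases lt_or_ge (g t) 0 with hneg | hpos
  · have hlt : g t < -π := by
      rw [abs_of_neg hneg] at habs
      linarith
    have hmem : -π ∈ Icc (g t) (g 0) := by
      rw [hg0]
      exact ⟨by linarith, by linarith⟩
    obtain ⟨s, hs, hgs⟩ := intermediate_value_Icc' ht0 hgsub hmem
    have hs1 : s ∈ Icc (0:ℝ) 1 := ⟨hs.1, hs.2.trans ht.2⟩
    exact hval s hs1 (by rw [hgs, abs_neg, abs_of_pos hπ])
  · have hlt : π < g t := by
      rw [abs_of_nonneg hpos] at habs
      linarith
    have hmem : π ∈ Icc (g 0) (g t) := by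
      rw [hg0]
      exact ⟨by linarith, by linarith⟩
    obtain ⟨s, hs, hgs⟩ := intermediate_value_Icc ht0 hgsub hmem
    have hs1 : s ∈ Icc (0:ℝ) 1 := ⟨hs.1, hs.2.trans ht.2⟩
    exact hval s hs1 (by rw [hgs, abs_of_pos hπ])

-- L5: angle comparison
lemma angle_compare (θ ψ : ℝ → ℝ) (hθ : ContinuousOn θ (Icc 0 1))
    (hψ : ContinuousOn ψ (Icc 0 1)) (ε : ℝ) (hε0 : 0 ≤ ε) (hε1 : ε ≤ 1)
    (h : ∀ t ∈ Icc (0:ℝ) 1,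
      ‖Complex.exp ((θ t : ℂ) * Complex.I) - Complex.exp ((ψ t : ℂ) * Complex.I)‖ ≤ ε) :
    |(θ 1 - θ 0) - (ψ 1 - ψ 0)| ≤ 4 * Real.arcsin (ε/2) := by
  have hπ := Real.pi_pos
  set c := 2 * Real.arcsin (ε/2) with hcdef
  have hc0 : 0 ≤ c := by
    have := Real.arcsin_nonneg.mpr (by linarith : (0:ℝ) ≤ ε/2)
    linarith
  have harc16 : Real.arcsin (1/2) = π/6 := by
    have h6 : Real.arcsin (Real.sin (π/6)) = π/6 :=
      Real.arcsin_sin (by linarith) (by linarith)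
    rwa [Real.sin_pi_div_six] at h6
  have hcle : c ≤ π/3 := by
    have : Real.arcsin (ε/2) ≤ Real.arcsin (1/2) :=
      Real.monotone_arcsin (by linarith)
    rw [harc16] at this
    linarith
  have hd : ∀ t ∈ Icc (0:ℝ) 1, ∃ k : ℤ, |(θ t - ψ t) - 2*π*k| ≤ c := by
    intro t ht
    apply dist_int_of_sin_small
    rw [← norm_exp_I_sub_exp_I]
    exact h t ht
  set g : ℝ → ℝ := fun t => (θ t - ψ t) - (θ 0 - ψ 0) with hgdef
  have hg : ContinuousOn g (Icc 0 1) := (hθ.sub hψ).sub continuousOn_const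
  have hg0 : g 0 = 0 := sub_self _
  have h0mem : (0:ℝ) ∈ Icc (0:ℝ) 1 := ⟨le_refl _, zero_le_one⟩
  have h1mem : (1:ℝ) ∈ Icc (0:ℝ) 1 := ⟨zero_le_one, le_refl _⟩
  have hd2 : ∀ t ∈ Icc (0:ℝ) 1, ∃ k : ℤ, |g t - 2*π*k| ≤ 2*c := by
    intro t ht
    obtain ⟨k, hk⟩ := hd t ht
    obtain ⟨k0, hk0⟩ := hd 0 h0mem
    refine ⟨k - k0, ?_⟩
    have heq : g t - 2*π*((k - k0 : ℤ):ℝ)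
        = ((θ t - ψ t) - 2*π*k) - ((θ 0 - ψ 0) - 2*π*k0) := by
      push_cast
      simp only [hgdef]
      ring
    rw [heq]
    calc |((θ t - ψ t) - 2*π*k) - ((θ 0 - ψ 0) - 2*π*k0)|
        ≤ |(θ t - ψ t) - 2*π*k| + |(θ 0 - ψ 0) - 2*π*k0| := abs_sub _ _
      _ ≤ 2*c := by linarith
  have hfin := no_jump g hg hg0 (2*c) (by linarith) (by linarith) hd2 1 h1mem
  have : (θ 1 - θ 0) - (ψ 1 - ψ 0) = g 1 := by simp only [hgdef]; ring
  rw [this]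
  calc |g 1| ≤ 2*c := hfin
    _ = 4 * Real.arcsin (ε/2) := by rw [hcdef]; ring


/-- If the derivatives `(t,x) ↦ D(f_t)_x` of the isotopy are jointly
continuous and `(x_n, y_n)` is a sequence of distinct pairs of points of the disk with
`x_n → x`, `y_n → x` and `(y_n - x_n)/|y_n - x_n| → ξ` (a unit vector), then the
winding numbers `W_{f̃}(x_n, y_n)` converge to the linearized winding number
`w_{f̃}(x, ξ)`, i.e. the variation over `t ∈ [0,1]` of the angle of `D(f_t)_x(ξ)`
divided by `2π`. -/
theorem stmt_5 (I : DiskIsotopy)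
    (hD : ContinuousOn (fun p : ℝ × ℂ => fderiv ℝ (I.ft p.1) p.2)
      (Set.Icc (0:ℝ) 1 ×ˢ Disk))
    (W : ℂ → ℂ → ℝ) (hW : IsWinding I.ft W)
    (x : ℂ) (hx : x ∈ Disk) (ξ : ℂ) (hξ : ‖ξ‖ = 1)
    (xs ys : ℕ → ℂ) (hxs : ∀ n, xs n ∈ Disk) (hys : ∀ n, ys n ∈ Disk)
    (hne : ∀ n, xs n ≠ ys n)
    (hxlim : Tendsto xs atTop (nhds x)) (hylim : Tendsto ys atTop (nhds x))
    (hdir : Tendsto (fun n => (ys n - xs n) / (‖ys n - xs n‖ : ℂ)) atTop (nhds ξ))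
    (wval : ℝ)
    (hwv : ∃ ψ : ℝ → ℝ, ContinuousOn ψ (Set.Icc 0 1) ∧
        (∀ t ∈ Set.Icc (0:ℝ) 1,
          (fderiv ℝ (I.ft t) x ξ) / (‖fderiv ℝ (I.ft t) x ξ‖ : ℂ)
            = Complex.exp ((ψ t : ℂ) * Complex.I)) ∧
        wval = (ψ 1 - ψ 0) / (2 * π)) :
    Tendsto (fun n => W (xs n) (ys n)) atTop (nhds wval) := by
  obtain ⟨ψ, hψc, hψe, hwe⟩ := hwv
  have hπ := Real.pi_pos
  have h0mem : (0:ℝ) ∈ Set.Icc (0:ℝ) 1 := ⟨le_refl _, zero_le_one⟩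
  have hDiskEq : Disk = Metric.closedBall (0:ℂ) 1 := rfl
  -- continuity of the derivative at `x` in `t`
  have hmap : Set.MapsTo (fun t : ℝ => ((t, x) : ℝ × ℂ)) (Set.Icc (0:ℝ) 1)
      (Set.Icc (0:ℝ) 1 ×ˢ Disk) := fun t ht => ⟨ht, hx⟩
  have hDxcont : ContinuousOn (fun t : ℝ => fderiv ℝ (I.ft t) x) (Set.Icc (0:ℝ) 1) := by
    have hc : ContinuousOn (fun t : ℝ => ((t, x) : ℝ × ℂ)) (Set.Icc (0:ℝ) 1) :=
      (continuous_id.prodMk continuous_const).continuousOn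
    exact hD.comp hc hmap
  have hVcont : ContinuousOn (fun t : ℝ => fderiv ℝ (I.ft t) x ξ) (Set.Icc (0:ℝ) 1) := by
    have hev : Continuous (fun L : ℂ →L[ℝ] ℂ => L ξ) :=
      (ContinuousLinearMap.apply ℝ ℂ ξ).continuous
    exact hev.comp_continuousOn hDxcont
  have hVne : ∀ t ∈ Set.Icc (0:ℝ) 1, fderiv ℝ (I.ft t) x ξ ≠ 0 := by
    intro t ht h0
    have h1 := hψe t ht
    rw [h0] at h1
    simp at h1
    exact (Complex.exp_ne_zero _) h1.symm
  obtain ⟨t₀, ht₀, hmin⟩ := isCompact_Icc.exists_isMinOn ⟨0, h0mem⟩ hVcont.norm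
  set m := ‖fderiv ℝ (I.ft t₀) x ξ‖ with hmdef
  have hm : 0 < m := norm_pos_iff.mpr (hVne t₀ ht₀)
  have hmle : ∀ t ∈ Set.Icc (0:ℝ) 1, m ≤ ‖fderiv ℝ (I.ft t) x ξ‖ := fun t ht => hmin ht
  obtain ⟨t₁, ht₁, hmax⟩ := isCompact_Icc.exists_isMaxOn ⟨0, h0mem⟩ hDxcont.norm
  set M := ‖fderiv ℝ (I.ft t₁) x‖ + 1 with hMdef
  have hM : 0 < M := by positivity
  have hMle : ∀ t ∈ Set.Icc (0:ℝ) 1, ‖fderiv ℝ (I.ft t) x‖ ≤ M := by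
    intro t ht
    have h1 : ‖fderiv ℝ (I.ft t) x‖ ≤ ‖fderiv ℝ (I.ft t₁) x‖ := hmax ht
    rw [hMdef]
    linarith
  rw [Metric.tendsto_atTop]
  intro ε₀ hε₀
  -- choose ε₁ using continuity of arcsin at 0
  have harc : Tendsto Real.arcsin (nhds 0) (nhds 0) := by
    have := Real.continuous_arcsin.tendsto 0
    rwa [Real.arcsin_zero] at this
  obtain ⟨η, hη, hηP⟩ := Metric.tendsto_nhds_nhds.mp harc (π*ε₀/8) (by positivity)
  set ε₁ := min 1 η with hε₁def
  have hε₁pos : 0 < ε₁ := lt_min one_pos hη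
  have hε₁le1 : ε₁ ≤ 1 := min_le_left _ _
  have harc1 : Real.arcsin (ε₁/2) < π*ε₀/8 := by
    have hd : dist (ε₁/2) 0 < η := by
      rw [Real.dist_eq, sub_zero, abs_of_pos (by linarith)]
      have : ε₁ ≤ η := min_le_right _ _
      linarith
    have h2 := hηP hd
    rw [Real.dist_eq, sub_zero] at h2
    rwa [abs_of_nonneg (Real.arcsin_nonneg.mpr (by linarith))] at h2
  -- choose ε₃
  set ε₃ := min (m/4) (ε₁*m/8) with hε₃def
  have hε₃pos : 0 < ε₃ := lt_min (by linarith) (by positivity)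
  have hε₃m : ε₃ ≤ m/4 := min_le_left _ _
  have hε₃ε₁ : 8*ε₃/m ≤ ε₁ := by
    have h1 : ε₃ ≤ ε₁*m/8 := min_le_right _ _
    rw [div_le_iff₀ hm]
    nlinarith
  -- uniform continuity of the derivative on the compact set
  have hKcomp : IsCompact (Set.Icc (0:ℝ) 1 ×ˢ Disk) :=
    isCompact_Icc.prod (isCompact_closedBall _ _)
  have hUC := hKcomp.uniformContinuousOn_of_continuous hD
  obtain ⟨δ, hδ, hδP⟩ := Metric.uniformContinuousOn_iff.mp hUC ε₃ hε₃pos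
  -- eventual smallness
  obtain ⟨N₁, hN₁⟩ := Metric.tendsto_atTop.mp hxlim (δ/2) (by linarith)
  obtain ⟨N₂, hN₂⟩ := Metric.tendsto_atTop.mp hylim (δ/2) (by linarith)
  obtain ⟨N₃, hN₃⟩ := Metric.tendsto_atTop.mp hdir (ε₃/M) (div_pos hε₃pos hM)
  refine ⟨max N₁ (max N₂ N₃), fun n hn => ?_⟩
  have hxn : dist (xs n) x < δ/2 := hN₁ n (le_trans (le_max_left _ _) hn)
  have hyn : dist (ys n) x < δ/2 :=
    hN₂ n (le_trans ((le_max_left _ _).trans (le_max_right _ _)) hn)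
  have hdn : dist ((ys n - xs n) / (‖ys n - xs n‖ : ℂ)) ξ < ε₃/M :=
    hN₃ n (le_trans ((le_max_right _ _).trans (le_max_right _ _)) hn)
  obtain ⟨θ, hθc, hθe, hWe⟩ := hW (xs n) (hxs n) (ys n) (hys n) (hne n)
  set r := ‖ys n - xs n‖ with hrdef
  have hyx : ys n - xs n ≠ 0 := sub_ne_zero.mpr (Ne.symm (hne n))
  have hr : 0 < r := norm_pos_iff.mpr hyx
  -- key uniform estimate on the circle maps
  have key : ∀ t ∈ Set.Icc (0:ℝ) 1,
      ‖Complex.exp ((θ t : ℂ) * Complex.I) - Complex.exp ((ψ t : ℂ) * Complex.I)‖ ≤ ε₁ := by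
    intro t ht
    set Dx := fderiv ℝ (I.ft t) x with hDxdef
    set num := I.ft t (ys n) - I.ft t (xs n) with hnumdef
    have hnum0 : num ≠ 0 := by
      intro h0
      have h1 := hθe t ht
      rw [show I.ft t (ys n) - I.ft t (xs n) = num from rfl, h0] at h1
      simp at h1
      exact (Complex.exp_ne_zero _) h1.symm
    have hsegD : segment ℝ (xs n) (ys n) ⊆ Disk := by
      rw [hDiskEq]
      exact (convex_closedBall _ _).segment_subset (hxs n) (hys n)
    have hsegB : segment ℝ (xs n) (ys n) ⊆ Metric.closedBall x (δ/2) :=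
      (convex_closedBall x (δ/2)).segment_subset
        (Metric.mem_closedBall.mpr hxn.le) (Metric.mem_closedBall.mpr hyn.le)
    have bound : ∀ z ∈ segment ℝ (xs n) (ys n), ‖fderiv ℝ (I.ft t) z - Dx‖ ≤ ε₃ := by
      intro z hz
      have hzD : z ∈ Disk := hsegD hz
      have hzd : dist z x < δ := by
        have h1 := hsegB hz
        rw [Metric.mem_closedBall] at h1
        linarith
      have h1 : ((t, z) : ℝ × ℂ) ∈ Set.Icc (0:ℝ) 1 ×ˢ Disk := ⟨ht, hzD⟩
      have h2 : ((t, x) : ℝ × ℂ) ∈ Set.Icc (0:ℝ) 1 ×ˢ Disk := ⟨ht, hx⟩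
      have hdist : dist ((t, z) : ℝ × ℂ) ((t, x) : ℝ × ℂ) < δ := by
        rw [Prod.dist_eq]
        simp only [dist_self]
        rw [max_eq_right dist_nonneg]
        exact hzd
      have h3 := hδP (t, z) h1 (t, x) h2 hdist
      rw [dist_eq_norm] at h3
      exact h3.le
    have hdiffseg : ∀ z ∈ segment ℝ (xs n) (ys n),
        HasFDerivWithinAt (I.ft t) (fderiv ℝ (I.ft t) z) (segment ℝ (xs n) (ys n)) z :=
      fun z _ => (((I.contDiff t ht).differentiable one_ne_zero) z).hasFDerivAt.hasFDerivWithinAt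
    have hmvt := Convex.norm_image_sub_le_of_norm_hasFDerivWithin_le' hdiffseg bound
      (convex_segment _ _) (left_mem_segment ℝ (xs n) (ys n))
      (right_mem_segment ℝ (xs n) (ys n))
    set v : ℂ := r⁻¹ • num with hvdef
    have h2 : ‖v - Dx ((ys n - xs n) / (r : ℂ))‖ ≤ ε₃ := by
      rw [div_real_eq_smul, Dx.map_smul, hvdef, ← smul_sub, norm_smul, Real.norm_eq_abs,
        abs_of_pos (inv_pos.mpr hr)]
      calc r⁻¹ * ‖num - Dx (ys n - xs n)‖ ≤ r⁻¹ * (ε₃ * r) := by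
            apply mul_le_mul_of_nonneg_left _ (by positivity)
            exact hmvt
        _ = ε₃ := by field_simp
    have hen : ‖(ys n - xs n) / (r : ℂ) - ξ‖ < ε₃ / M := by
      rw [← dist_eq_norm]
      exact hdn
    have h3 : ‖Dx ((ys n - xs n) / (r : ℂ)) - Dx ξ‖ ≤ ε₃ := by
      rw [← map_sub]
      calc ‖Dx ((ys n - xs n) / (r : ℂ) - ξ)‖
          ≤ ‖Dx‖ * ‖(ys n - xs n) / (r : ℂ) - ξ‖ := Dx.le_opNorm _
        _ ≤ M * (ε₃/M) := mul_le_mul (hMle t ht) hen.le (norm_nonneg _) hM.le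
        _ = ε₃ := by field_simp
    have h4 : ‖v - Dx ξ‖ ≤ 2*ε₃ := by
      have htr := dist_triangle v (Dx ((ys n - xs n) / (r : ℂ))) (Dx ξ)
      rw [dist_eq_norm, dist_eq_norm, dist_eq_norm] at htr
      linarith
    have h5 : m/2 ≤ ‖v‖ := by
      have h6 := norm_sub_norm_le (Dx ξ) v
      rw [norm_sub_rev] at h6
      have hm' := hmle t ht
      rw [← hDxdef] at hm'
      linarith
    have h6 := norm_normalize_sub_normalize v (Dx ξ) (2*ε₃) (m/2) (hVne t ht)
      (by linarith) h5 h4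
    have h7 : Complex.exp ((θ t : ℂ) * Complex.I) = v / ((‖v‖ : ℝ) : ℂ) := by
      rw [← hθe t ht]
      exact (normalize_smul r⁻¹ (inv_pos.mpr hr) num hnum0).symm
    have h8 : Complex.exp ((ψ t : ℂ) * Complex.I) = (Dx ξ) / ((‖Dx ξ‖ : ℝ) : ℂ) :=
      (hψe t ht).symm
    rw [h7, h8]
    calc ‖v / ((‖v‖ : ℝ) : ℂ) - (Dx ξ) / ((‖Dx ξ‖ : ℝ) : ℂ)‖
        ≤ 2*(2*ε₃)/(m/2) := h6
      _ = 8*ε₃/m := by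
          field_simp
          ring
      _ ≤ ε₁ := hε₃ε₁
  -- conclude via the angle comparison lemma
  have hang := angle_compare θ ψ hθc hψc ε₁ hε₁pos.le hε₁le1 key
  rw [hWe, hwe, Real.dist_eq]
  have heq : (θ 1 - θ 0)/(2*π) - (ψ 1 - ψ 0)/(2*π) = ((θ 1 - θ 0) - (ψ 1 - ψ 0))/(2*π) := by
    ring
  rw [heq, abs_div, abs_of_pos (by linarith : (0:ℝ) < 2*π)]
  rw [div_lt_iff₀ (by linarith : (0:ℝ) < 2*π)]
  nlinarith [hang, harc1, hε₀]
end
end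

section
/- Let f be an area-preserving C¹ diffeomorphism of 𝔻 and let f̃ = (f_t) and g̃ = (g_t) be two area-preserving isotopies from id to f. If the rotation numbers of the lifted boundary isotopies agree, ρ(f̃) = ρ(g̃), then W_{f̃}(x,y) = W_{g̃}(x,y) for every pair of distinct points x, y ∈ 𝔻. -/
open MeasureTheory Metric Set Filter Topology
open scoped Real ENNReal

noncomputable section

-- ===== auxiliary lemmas =====

lemma intval_eq {g : ℝ → ℝ} (hc : ContinuousOn g (Icc 0 1))
    (hi : ∀ t ∈ Icc (0:ℝ) 1, ∃ n : ℤ, g t = n) : g 1 = g 0 := by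
  by_contra hne
  obtain ⟨n0, h0⟩ := hi 0 (by simp)
  obtain ⟨n1, h1⟩ := hi 1 (by simp)
  rcases lt_or_gt_of_ne hne with h | h
  · -- g 1 < g 0 ; value (n0:ℝ) - 1/2 is attained
    have hn : n1 < n0 := by exact_mod_cast h0 ▸ h1 ▸ h
    have hc' : ContinuousOn (fun t => g (1 - t)) (Icc 0 1) := by
      apply hc.comp (by fun_prop)
      intro t ht; simp only [mem_Icc] at ht ⊢; exact ⟨by linarith [ht.1, ht.2], by linarith [ht.1, ht.2]⟩
    have hmem : ((n0:ℝ) - 1/2) ∈ Icc (g (1-(0:ℝ))) (g (1-(1:ℝ))) := by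
      have : (n1:ℝ) ≤ (n0:ℝ) - 1 := by exact_mod_cast Int.le_sub_one_of_lt hn
      simp only [mem_Icc]; norm_num [h0, h1]
      linarith
    obtain ⟨t, ht, hgt⟩ := intermediate_value_Icc (by norm_num) hc' hmem
    obtain ⟨n, hnn⟩ := hi (1 - t) (by simp only [mem_Icc] at ht ⊢; exact ⟨by linarith [ht.1, ht.2], by linarith [ht.1, ht.2]⟩)
    simp only [hnn] at hgt
    have : 2*(n:ℝ) = 2*(n0:ℝ) - 1 := by linarith
    have : 2*n = 2*n0 - 1 := by exact_mod_cast this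
    omega
  · have hn : n0 < n1 := by exact_mod_cast h0 ▸ h1 ▸ h
    have hmem : ((n1:ℝ) - 1/2) ∈ Icc (g 0) (g 1) := by
      have : (n0:ℝ) ≤ (n1:ℝ) - 1 := by exact_mod_cast Int.le_sub_one_of_lt hn
      simp only [mem_Icc]; norm_num [h0, h1]
      linarith
    obtain ⟨t, ht, hgt⟩ := intermediate_value_Icc (by norm_num) hc hmem
    obtain ⟨n, hnn⟩ := hi t ht
    rw [hnn] at hgt
    have : 2*(n:ℝ) = 2*(n1:ℝ) - 1 := by linarith
    have : 2*n = 2*n1 - 1 := by exact_mod_cast this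
    omega

lemma exp_eq_exp_real {x y : ℝ} (h : Complex.exp (x * Complex.I) = Complex.exp (y * Complex.I)) :
    ∃ n : ℤ, x = y + 2 * π * n := by
  rw [Complex.exp_eq_exp_iff_exists_int] at h
  obtain ⟨n, hn⟩ := h
  refine ⟨n, ?_⟩
  have hI : (Complex.I : ℂ) ≠ 0 := Complex.I_ne_zero
  have : (x : ℂ) * Complex.I = ((y : ℝ) + 2 * π * n : ℝ) * Complex.I := by
    push_cast
    rw [hn]; ring
  have := mul_right_cancel₀ hI this
  exact_mod_cast this

lemma lift_unique {θ φ : ℝ → ℝ} (hθ : ContinuousOn θ (Icc 0 1)) (hφ : ContinuousOn φ (Icc 0 1))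
    (h : ∀ t ∈ Icc (0:ℝ) 1, Complex.exp ((θ t : ℂ) * Complex.I) = Complex.exp ((φ t : ℂ) * Complex.I)) :
    θ 1 - θ 0 = φ 1 - φ 0 := by
  have pi_pos := Real.pi_pos
  have key : (fun t => (θ t - φ t) / (2 * π)) 1 = (fun t => (θ t - φ t) / (2 * π)) 0 := by
    apply intval_eq (g := fun t => (θ t - φ t) / (2 * π))
    · exact (hθ.sub hφ).div_const _
    · intro t ht
      obtain ⟨n, hn⟩ := exp_eq_exp_real (h t ht)
      exact ⟨n, by field_simp [hn]; linarith⟩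
  have h2 : (2:ℝ) * π ≠ 0 := by positivity
  field_simp at key
  linarith

/-- Direction of the chord between two points of the circle. -/

lemma dir_formula {a b : ℝ} (h0 : 0 < b - a) (h1 : b - a < 2 * π) :
    (Complex.exp ((b:ℂ) * Complex.I) - Complex.exp ((a:ℂ) * Complex.I)) /
      (‖Complex.exp ((b:ℂ) * Complex.I) - Complex.exp ((a:ℂ) * Complex.I)‖ : ℂ)
      = Complex.exp ((((a+b)/2 + π/2 : ℝ) : ℂ) * Complex.I) := by
  have hsin : 0 < Real.sin ((b - a) / 2) :=
    Real.sin_pos_of_pos_of_lt_pi (by linarith) (by linarith)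
  have hv : Complex.exp ((b:ℂ) * Complex.I) - Complex.exp ((a:ℂ) * Complex.I)
      = (2 * Real.sin ((b - a)/2) : ℝ) * (Complex.exp ((((a+b)/2 : ℝ):ℂ) * Complex.I) * Complex.I) := by
    have e1 : (b:ℂ) * Complex.I = (((a+b)/2 : ℝ):ℂ) * Complex.I + (((b-a)/2 : ℝ):ℂ) * Complex.I := by
      push_cast; ring
    have e2 : (a:ℂ) * Complex.I = (((a+b)/2 : ℝ):ℂ) * Complex.I - (((b-a)/2 : ℝ):ℂ) * Complex.I := by
      push_cast; ring
    rw [e1, e2, Complex.exp_add, Complex.exp_sub]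
    have hne : Complex.exp ((((b-a)/2 : ℝ):ℂ) * Complex.I) ≠ 0 := Complex.exp_ne_zero _
    have hsin' : Complex.exp ((((b-a)/2 : ℝ):ℂ) * Complex.I)
        - (Complex.exp ((((b-a)/2 : ℝ):ℂ) * Complex.I))⁻¹
        = 2 * Complex.I * Complex.sin (((b-a)/2 : ℝ):ℂ) := by
      rw [Complex.sin, neg_mul, ← Complex.exp_neg]
      linear_combination (Complex.exp ((((b-a)/2 : ℝ):ℂ) * Complex.I)
        - Complex.exp (-((((b-a)/2 : ℝ):ℂ) * Complex.I))) * Complex.I_mul_I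
    rw [div_eq_mul_inv]
    calc Complex.exp ((((a+b)/2 : ℝ):ℂ) * Complex.I) * Complex.exp ((((b-a)/2 : ℝ):ℂ) * Complex.I)
        - Complex.exp ((((a+b)/2 : ℝ):ℂ) * Complex.I) * (Complex.exp ((((b-a)/2 : ℝ):ℂ) * Complex.I))⁻¹
        = Complex.exp ((((a+b)/2 : ℝ):ℂ) * Complex.I) *
          (Complex.exp ((((b-a)/2 : ℝ):ℂ) * Complex.I) - (Complex.exp ((((b-a)/2 : ℝ):ℂ) * Complex.I))⁻¹) := by ring
      _ = Complex.exp ((((a+b)/2 : ℝ):ℂ) * Complex.I) * (2 * Complex.I * Complex.sin (((b-a)/2 : ℝ):ℂ)) := by rw [hsin']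
      _ = (2 * Real.sin ((b - a)/2) : ℝ) * (Complex.exp ((((a+b)/2 : ℝ):ℂ) * Complex.I) * Complex.I) := by
          rw [← Complex.ofReal_sin]; push_cast; ring
  rw [hv]
  have hnorm : ‖(((2 * Real.sin ((b - a)/2) : ℝ):ℂ) * (Complex.exp ((((a+b)/2 : ℝ):ℂ) * Complex.I) * Complex.I))‖
      = 2 * Real.sin ((b - a)/2) := by
    rw [norm_mul, norm_mul]
    rw [Complex.norm_real, Complex.norm_I]
    rw [Complex.norm_exp_ofReal_mul_I]
    rw [Real.norm_eq_abs, abs_of_pos (by linarith)]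
    ring
  rw [hnorm]
  have hIexp : Complex.exp (((π/2 : ℝ):ℂ) * Complex.I) = Complex.I := by
    rw [Complex.exp_mul_I, ← Complex.ofReal_cos, ← Complex.ofReal_sin,
      Real.cos_pi_div_two, Real.sin_pi_div_two]
    simp
  have hs : ((2 * Real.sin ((b - a)/2) : ℝ) : ℂ) ≠ 0 := by
    simp only [ne_eq, Complex.ofReal_eq_zero]; positivity
  rw [mul_comm (((2 * Real.sin ((b - a)/2) : ℝ)):ℂ) _, mul_div_assoc, div_self hs, mul_one]
  calc Complex.exp ((((a+b)/2 : ℝ):ℂ) * Complex.I) * Complex.I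
      = Complex.exp ((((a+b)/2 : ℝ):ℂ) * Complex.I) * Complex.exp (((π/2 : ℝ):ℂ) * Complex.I) := by
        rw [hIexp]
    _ = Complex.exp ((((a+b)/2 + π/2 : ℝ) : ℂ) * Complex.I) := by
        rw [← Complex.exp_add]; congr 1; push_cast; ring

lemma intconst_global {g : ℝ → ℝ} (hc : Continuous g) (hi : ∀ s, ∃ n : ℤ, g s = n) (s : ℝ) :
    g s = g 0 := by
  have := intval_eq (g := fun t => g (t * s)) ((hc.comp (by fun_prop)).continuousOn)
    (fun t _ => hi (t * s))
  simpa using this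

lemma shift_int {G : ℝ → ℝ} (hG : ∀ s, G (s + 1) = G s + 1) (k : ℤ) (s : ℝ) :
    G (s + k) = G s + k := by
  induction k using Int.induction_on with
  | zero => simp
  | succ n ih =>
      have : s + ((n : ℤ) + 1 : ℤ) = (s + (n:ℤ)) + 1 := by push_cast; ring
      rw [this, hG, ih]; push_cast; ring
  | pred n ih =>
      have h1 : s + (-(n:ℤ) - 1 : ℤ) + 1 = s + (-(n:ℤ) : ℤ) := by push_cast; ring
      have := hG (s + (-(n:ℤ) - 1 : ℤ))
      rw [h1, ih] at this
      push_cast at this ⊢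
      linarith

lemma iter_shift {G : ℝ → ℝ} (hG : ∀ s, G (s + 1) = G s + 1) (m : ℤ) (n : ℕ) :
    (fun s => G s + (m : ℝ))^[n] 0 = G^[n] 0 + (n : ℝ) * (m : ℝ) := by
  induction n with
  | zero => simp
  | succ n ih =>
      rw [Function.iterate_succ_apply', Function.iterate_succ_apply', ih]
      have h1 : G^[n] 0 + (n:ℝ) * (m:ℝ) = G^[n] 0 + ((n * m : ℤ) : ℝ) := by push_cast; ring
      rw [h1, shift_int hG (n * m) (G^[n] 0)]
      push_cast; ring

lemma rot_eq {F G : ℝ → ℝ} (hFc : Continuous F) (hGc : Continuous G)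
    (hexp : ∀ s, Complex.exp (((2*π*F s : ℝ):ℂ) * Complex.I)
      = Complex.exp (((2*π*G s : ℝ):ℂ) * Complex.I))
    (hG1 : ∀ s, G (s + 1) = G s + 1)
    {ρ : ℝ} (hFρ : Tendsto (fun n : ℕ => F^[n] 0 / n) atTop (nhds ρ))
    (hGρ : Tendsto (fun n : ℕ => G^[n] 0 / n) atTop (nhds ρ)) : F = G := by
  have pi_pos := Real.pi_pos
  -- difference is a constant integer m
  have hint : ∀ s, ∃ n : ℤ, F s - G s = n := by
    intro s
    obtain ⟨n, hn⟩ := exp_eq_exp_real (hexp s)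
    refine ⟨n, ?_⟩
    have h2 : (2:ℝ) * π ≠ 0 := by positivity
    have h3 : 2 * π * (F s - G s - n) = 0 := by linarith
    rcases mul_eq_zero.mp h3 with h | h
    · exact absurd h (by positivity)
    · linarith
  have hconst : ∀ s, F s - G s = F 0 - G 0 :=
    intconst_global (by fun_prop) hint
  obtain ⟨m, hm⟩ := hint 0
  have hFG : F = fun s => G s + (m : ℝ) := by
    funext s
    have := hconst s
    rw [hm] at this
    linarith
  -- iterates
  have hiter : ∀ n : ℕ, F^[n] 0 = G^[n] 0 + (n : ℝ) * (m : ℝ) := by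
    intro n; rw [hFG]; exact iter_shift hG1 m n
  have hFρ' : Tendsto (fun n : ℕ => F^[n] 0 / n) atTop (nhds (ρ + m)) := by
    have h1 : Tendsto (fun n : ℕ => G^[n] 0 / n + (m : ℝ)) atTop (nhds (ρ + m)) :=
      hGρ.add tendsto_const_nhds
    apply h1.congr'
    filter_upwards [eventually_gt_atTop 0] with n hn
    have hn' : (n : ℝ) ≠ 0 := by positivity
    rw [hiter n]
    field_simp
  have : ρ = ρ + (m : ℝ) := tendsto_nhds_unique hFρ hFρ'
  have hm0 : (m : ℝ) = 0 := by linarith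
  rw [hFG]
  funext s
  rw [hm0, add_zero]

lemma exp_mem_disk (s : ℝ) : Complex.exp ((s:ℂ) * Complex.I) ∈ Disk := by
  simp [Disk, Metric.mem_closedBall, Complex.dist_eq, Complex.norm_exp_ofReal_mul_I]

lemma boundary_winding (ft : ℝ → ℂ → ℂ)
    (hinj : ∀ t ∈ Icc (0:ℝ) 1, Set.InjOn (ft t) Disk)
    (W : ℂ → ℂ → ℝ) (hW : IsWinding ft W)
    (F : ℝ → ℝ → ℝ) (hFc : Continuous fun p : ℝ × ℝ => F p.1 p.2)
    (hF0 : ∀ s, F 0 s = s)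
    (hlift : ∀ t ∈ Icc (0:ℝ) 1, ∀ s : ℝ,
      ft t (Complex.exp (((2*π*s : ℝ):ℂ) * Complex.I))
        = Complex.exp (((2*π*F t s : ℝ):ℂ) * Complex.I))
    (sx : ℝ) :
    W (Complex.exp (((2*π*sx : ℝ):ℂ) * Complex.I))
      (Complex.exp (((2*π*(sx+1/2) : ℝ):ℂ) * Complex.I))
      = (F 1 sx + F 1 (sx+1/2) - (sx + (sx+1/2))) / 2 := by
  have pi_pos := Real.pi_pos
  set sy : ℝ := sx + 1/2 with hsy
  set x : ℂ := Complex.exp (((2*π*sx : ℝ):ℂ) * Complex.I) with hx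
  set y : ℂ := Complex.exp (((2*π*sy : ℝ):ℂ) * Complex.I) with hy
  have hxD : x ∈ Disk := exp_mem_disk _
  have hyD : y ∈ Disk := exp_mem_disk _
  have hxy : x ≠ y := by
    intro h
    obtain ⟨n, hn⟩ := exp_eq_exp_real (x := 2*π*sx) (y := 2*π*sy) h
    have : 2*π*sx - 2*π*sy = 2*π*n := by linarith
    have h3 : 2*π*(sx - sy - n) = 0 := by linarith
    rcases mul_eq_zero.mp h3 with h | h
    · exact absurd h (by positivity)
    · have : (2:ℝ)*(sx - sy) = 2*n := by linarith
      rw [hsy] at this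
      have : (-1 : ℝ) = 2*n := by linarith
      have : (-1 : ℤ) = 2*n := by exact_mod_cast this
      omega
  -- the gap function
  set d : ℝ → ℝ := fun t => F t sy - F t sx with hd
  have hFX : Continuous fun t => F t sx :=
    hFc.comp (Continuous.prodMk continuous_id continuous_const)
  have hFY : Continuous fun t => F t sy :=
    hFc.comp (Continuous.prodMk continuous_id continuous_const)
  have hdc : Continuous d := hFY.sub hFX
  have hd0 : d 0 = 1/2 := by simp [hd, hF0, hsy]
  have hdnotint : ∀ t ∈ Icc (0:ℝ) 1, ∀ n : ℤ, d t ≠ n := by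
    intro t ht n hn
    apply hxy
    apply hinj t ht hxD hyD
    rw [hx, hy, hlift t ht, hlift t ht]
    have : (2*π*F t sy : ℝ) = (2*π*F t sx : ℝ) + 2*π*n := by
      have : F t sy = F t sx + n := by rw [← hn]; simp [hd]
      rw [this]; ring
    rw [this]
    push_cast
    rw [add_mul, Complex.exp_add]
    have : Complex.exp (2*(π:ℂ)*(n:ℂ)*Complex.I) = 1 := by
      rw [Complex.exp_eq_one_iff]
      exact ⟨n, by ring⟩
    rw [this, mul_one]
  have hdint : ∀ t ∈ Icc (0:ℝ) 1, 0 < d t ∧ d t < 1 := by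
    intro t ht
    have hct : ContinuousOn d (Icc 0 t) := hdc.continuousOn
    have hct' : ContinuousOn d (Icc 0 t) := hdc.continuousOn
    constructor
    · by_contra hle
      push_neg at hle
      have h0m : (0:ℝ) ∈ Icc (d t) (d 0) := by rw [hd0]; exact ⟨hle, by norm_num⟩
      obtain ⟨t', ht', h0⟩ := intermediate_value_Icc' ht.1 hct h0m
      exact hdnotint t' ⟨ht'.1, le_trans ht'.2 ht.2⟩ 0 (by simpa using h0)
    · by_contra hge
      push_neg at hge
      have h1m : (1:ℝ) ∈ Icc (d 0) (d t) := by rw [hd0]; exact ⟨by norm_num, hge⟩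
      obtain ⟨t', ht', h1⟩ := intermediate_value_Icc ht.1 hct' h1m
      exact hdnotint t' ⟨ht'.1, le_trans ht'.2 ht.2⟩ 1 (by simpa using h1)
  -- explicit lift
  set θ : ℝ → ℝ := fun t => π * (F t sx + F t sy) + π/2 with hθdef
  have hθc : ContinuousOn θ (Icc 0 1) := by
    apply Continuous.continuousOn
    apply Continuous.add _ continuous_const
    exact Continuous.mul continuous_const (hFX.add hFY)
  have hθlift : ∀ t ∈ Icc (0:ℝ) 1,
      (ft t y - ft t x) / (‖ft t y - ft t x‖ : ℂ) = Complex.exp ((θ t : ℂ) * Complex.I) := by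
    intro t ht
    rw [hx, hy, hlift t ht, hlift t ht]
    have h0 : 0 < 2*π*F t sy - 2*π*F t sx := by
      have := (hdint t ht).1
      simp only [hd] at this
      nlinarith
    have h1 : 2*π*F t sy - 2*π*F t sx < 2*π := by
      have := (hdint t ht).2
      simp only [hd] at this
      nlinarith
    have := dir_formula h0 h1
    rw [this]
    congr 2
    push_cast
    simp only [hθdef]
    push_cast
    ring
  -- compare with the lift from hW
  obtain ⟨θ', hθ'c, hθ'lift, hWeq⟩ := hW x hxD y hyD hxy
  have hdiff : θ' 1 - θ' 0 = θ 1 - θ 0 := by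
    apply lift_unique hθ'c hθc
    intro t ht
    rw [← hθ'lift t ht, hθlift t ht]
  rw [hWeq, hdiff]
  simp only [hθdef, hF0]
  field_simp
  ring

lemma windiff_int {f g : ℝ → ℂ → ℂ} (h0f : ∀ z, f 0 z = z) (h0g : ∀ z, g 0 z = z)
    (hend : f 1 = g 1) {Wf Wg : ℂ → ℂ → ℝ} (hWf : IsWinding f Wf) (hWg : IsWinding g Wg)
    {x y : ℂ} (hx : x ∈ Disk) (hy : y ∈ Disk) (hxy : x ≠ y) :
    ∃ n : ℤ, Wf x y - Wg x y = n := by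
  have pi_pos := Real.pi_pos
  obtain ⟨θ, hθc, hθl, hθW⟩ := hWf x hx y hy hxy
  obtain ⟨φ, hφc, hφl, hφW⟩ := hWg x hx y hy hxy
  have h0 : Complex.exp ((θ 0 : ℂ) * Complex.I) = Complex.exp ((φ 0 : ℂ) * Complex.I) := by
    rw [← hθl 0 (by norm_num), ← hφl 0 (by norm_num), h0f, h0f, h0g, h0g]
  have h1 : Complex.exp ((θ 1 : ℂ) * Complex.I) = Complex.exp ((φ 1 : ℂ) * Complex.I) := by
    rw [← hθl 1 (by norm_num), ← hφl 1 (by norm_num), hend]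
  obtain ⟨n0, hn0⟩ := exp_eq_exp_real h0
  obtain ⟨n1, hn1⟩ := exp_eq_exp_real h1
  refine ⟨n1 - n0, ?_⟩
  rw [hθW, hφW]
  have h2 : (2:ℝ) * π ≠ 0 := by positivity
  field_simp
  push_cast
  linarith

/-- Local near-constancy of the winding number. -/

lemma wind_locconst {f : ℝ → ℂ → ℂ}
    (hjc : ContinuousOn (fun p : ℝ × ℂ => f p.1 p.2) (Icc 0 1 ×ˢ Disk))
    (hinj : ∀ t ∈ Icc (0:ℝ) 1, Set.InjOn (f t) Disk)
    {W : ℂ → ℂ → ℝ} (hW : IsWinding f W)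
    {x y : ℂ} (hx : x ∈ Disk) (hy : y ∈ Disk) (hxy : x ≠ y) :
    ∃ ε > 0, ∀ x' ∈ Disk, ∀ y' ∈ Disk, x' ≠ y' → dist x' x < ε → dist y' y < ε →
      |W x' y' - W x y| < 1/2 := by
  have pi_pos := Real.pi_pos
  have hKcomp : IsCompact (Icc (0:ℝ) 1 ×ˢ Disk) :=
    isCompact_Icc.prod (isCompact_closedBall 0 1)
  -- continuity of t ↦ f t z for z ∈ Disk
  have hcont : ∀ z ∈ Disk, ContinuousOn (fun t => f t z) (Icc 0 1) := by
    intro z hz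
    have h1 : ContinuousOn ((fun p : ℝ × ℂ => f p.1 p.2) ∘ (fun t : ℝ => (t, z))) (Icc 0 1) :=
      hjc.comp (Continuous.continuousOn (Continuous.prodMk continuous_id continuous_const))
        (fun t ht => ⟨ht, hz⟩)
    exact h1
  set v : ℝ → ℂ := fun t => f t y - f t x with hv
  have hvc : ContinuousOn v (Icc 0 1) := (hcont y hy).sub (hcont x hx)
  have hvne : ∀ t ∈ Icc (0:ℝ) 1, v t ≠ 0 := by
    intro t ht h
    apply hxy
    apply hinj t ht hx hy
    have := sub_eq_zero.mp h
    exact this.symm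
  -- minimum of ‖v‖
  obtain ⟨t0, ht0, hmin⟩ := isCompact_Icc.exists_isMinOn (by norm_num : (Icc (0:ℝ) 1).Nonempty)
    hvc.norm
  set δ : ℝ := ‖v t0‖ with hδ
  have hδpos : 0 < δ := norm_pos_iff.mpr (hvne t0 ht0)
  -- uniform continuity
  have huc := hKcomp.uniformContinuousOn_of_continuous hjc
  rw [Metric.uniformContinuousOn_iff] at huc
  obtain ⟨ε, hεpos, hε⟩ := huc (δ/4) (by positivity)
  refine ⟨ε, hεpos, ?_⟩
  intro x' hx' y' hy' hxy' hdx hdy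
  -- closeness of trajectories
  have hclose : ∀ z ∈ Disk, ∀ z' ∈ Disk, dist z' z < ε →
      ∀ t ∈ Icc (0:ℝ) 1, dist (f t z') (f t z) < δ/4 := by
    intro z hz z' hz' hd t ht
    have := hε (t, z') ⟨ht, hz'⟩ (t, z) ⟨ht, hz⟩ (by
      rw [Prod.dist_eq, max_lt_iff]
      constructor
      · simpa using hεpos
      · exact hd)
    exact this
  set v' : ℝ → ℂ := fun t => f t y' - f t x' with hv'
  have hv'c : ContinuousOn v' (Icc 0 1) := (hcont y' hy').sub (hcont x' hx')
  have hv'ne : ∀ t ∈ Icc (0:ℝ) 1, v' t ≠ 0 := by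
    intro t ht h
    exact hxy' (hinj t ht hx' hy' (sub_eq_zero.mp h).symm)
  have hdiff : ∀ t ∈ Icc (0:ℝ) 1, ‖v' t - v t‖ < δ/2 := by
    intro t ht
    have h1 := hclose y hy y' hy' hdy t ht
    have h2 := hclose x hx x' hx' hdx t ht
    calc ‖v' t - v t‖ = ‖(f t y' - f t y) - (f t x' - f t x)‖ := by rw [hv, hv']; ring_nf
      _ ≤ ‖f t y' - f t y‖ + ‖f t x' - f t x‖ := norm_sub_le _ _
      _ < δ/4 + δ/4 := by
          rw [← dist_eq_norm, ← dist_eq_norm]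
          exact add_lt_add h1 h2
      _ = δ/2 := by ring
  -- ratio
  set r : ℝ → ℂ := fun t => v' t / v t with hr
  have hrre : ∀ t ∈ Icc (0:ℝ) 1, 1/2 < (r t).re := by
    intro t ht
    have hvt := hvne t ht
    have hnorm : ‖r t - 1‖ < 1/2 := by
      have : r t - 1 = (v' t - v t) / v t := by
        field_simp [hr]
        simp only [hr]; rw [sub_mul, div_mul_cancel₀ _ hvt, one_mul]
      rw [this, norm_div]
      have hvpos : 0 < ‖v t‖ := norm_pos_iff.mpr hvt
      rw [div_lt_iff₀ hvpos]
      calc ‖v' t - v t‖ < δ/2 := hdiff t ht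
        _ ≤ ‖v t‖ / 2 := by
            have := hmin ht
            simp only [IsMinOn, IsMinFilter] at this
            have h2 : δ ≤ ‖v t‖ := hmin ht
            linarith
        _ = 1/2 * ‖v t‖ := by ring
    have habs : |(r t - 1).re| ≤ ‖r t - 1‖ := by
      exact Complex.abs_re_le_norm _
    have : (r t).re - 1 = (r t - 1).re := by simp
    have h3 : |(r t).re - 1| < 1/2 := by rw [this]; exact lt_of_le_of_lt habs hnorm
    rw [abs_lt] at h3
    linarith [h3.1]
  have hrne : ∀ t ∈ Icc (0:ℝ) 1, r t ≠ 0 := fun t ht =>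
    div_ne_zero (hv'ne t ht) (hvne t ht)
  -- angle correction
  set ψ : ℝ → ℝ := fun t => (r t).arg with hψ
  have hψc : ContinuousOn ψ (Icc 0 1) := by
    intro t ht
    have hrc : ContinuousWithinAt r (Icc 0 1) t := ((hv'c t ht).div (hvc t ht) (hvne t ht))
    have hsp : r t ∈ Complex.slitPlane := Complex.mem_slitPlane_iff.mpr (Or.inl (by linarith [hrre t ht]))
    exact (Complex.continuousAt_arg hsp).comp_continuousWithinAt hrc
  have hψbound : ∀ t ∈ Icc (0:ℝ) 1, |ψ t| < π/2 := by
    intro t ht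
    exact Complex.abs_arg_lt_pi_div_two_iff.mpr (Or.inl (by linarith [hrre t ht]))
  -- lifts
  obtain ⟨θ, hθc, hθl, hθW⟩ := hW x hx y hy hxy
  obtain ⟨θ'', hθ''c, hθ''l, hθ''W⟩ := hW x' hx' y' hy' hxy'
  have hlift' : ∀ t ∈ Icc (0:ℝ) 1,
      Complex.exp ((θ'' t : ℂ) * Complex.I) = Complex.exp (((θ t + ψ t : ℝ) : ℂ) * Complex.I) := by
    intro t ht
    rw [← hθ''l t ht]
    have hexpψ : Complex.exp ((ψ t : ℂ) * Complex.I) = r t / (‖r t‖ : ℂ) := by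
      have := Complex.norm_mul_exp_arg_mul_I (r t)
      have habs : (‖r t‖ : ℂ) ≠ 0 := by
        simp only [ne_eq, Complex.ofReal_eq_zero, norm_eq_zero]
        exact hrne t ht
      field_simp [hψ]
      linear_combination this
    have : ((θ t + ψ t : ℝ) : ℂ) * Complex.I = (θ t : ℂ) * Complex.I + (ψ t : ℂ) * Complex.I := by
      push_cast; ring
    rw [this, Complex.exp_add, ← hθl t ht, hexpψ]
    -- goal: v'/(‖v'‖:ℂ) = (v/(‖v‖:ℂ)) * (r/(abs r:ℂ))
    have hvt := hvne t ht
    have hv't := hv'ne t ht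
    have hrt := hrne t ht
    have hv'eq : v' t = r t * v t := by simp only [hr]; rw [div_mul_cancel₀ _ hvt]
    have hnormeq : ‖v' t‖ = ‖r t‖ * ‖v t‖ := by
      rw [hv'eq, norm_mul]
    show (f t y' - f t x') / (‖f t y' - f t x'‖ : ℂ)
        = (f t y - f t x) / (‖f t y - f t x‖ : ℂ) * (r t / (‖r t‖ : ℂ))
    have e1 : f t y' - f t x' = v' t := rfl
    have e2 : f t y - f t x = v t := rfl
    rw [e1, e2, hnormeq, hv'eq]
    have hb1 : (‖v t‖ : ℂ) ≠ 0 := by simp [norm_eq_zero, hvt]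
    have hb2 : (‖r t‖ : ℂ) ≠ 0 := by
      simp only [ne_eq, Complex.ofReal_eq_zero, norm_eq_zero]; exact hrt
    push_cast
    field_simp
  have hkey : θ'' 1 - θ'' 0 = (θ 1 + ψ 1) - (θ 0 + ψ 0) := by
    have := lift_unique hθ''c (hθc.add hψc) hlift'
    simpa using this
  rw [hθ''W, hθW]
  have hψ0 := hψbound 0 (by norm_num)
  have hψ1 := hψbound 1 (by norm_num)
  rw [hkey]
  have h2 : (0:ℝ) < 2 * π := by positivity
  have heq : ((θ 1 + ψ 1) - (θ 0 + ψ 0)) / (2*π) - (θ 1 - θ 0) / (2*π) = (ψ 1 - ψ 0) / (2*π) := by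
    ring
  rw [heq]
  have habs : |ψ 1 - ψ 0| < π := by
    calc |ψ 1 - ψ 0| ≤ |ψ 1| + |ψ 0| := by
          rw [sub_eq_add_neg]
          refine le_trans (abs_add_le _ _) ?_
          rw [abs_neg]
      _ < π/2 + π/2 := add_lt_add hψ1 hψ0
      _ = π := by ring
  rw [abs_div, abs_of_pos h2, div_lt_iff₀ h2]
  linarith


/-- Two area-preserving isotopies from the identity to the same `C¹`
diffeomorphism `f` of the disk having the same boundary rotation number define the
same winding number on every pair of distinct points of the disk. -/
theorem stmt_6 (I J : DiskIsotopy) (hend : I.ft 1 = J.ft 1)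
    (Wf Wg : ℂ → ℂ → ℝ) (hWf : IsWinding I.ft Wf) (hWg : IsWinding J.ft Wg)
    (ρ : ℝ) (hρI : IsRotNum I.ft ρ) (hρJ : IsRotNum J.ft ρ) :
    ∀ x ∈ Disk, ∀ y ∈ Disk, x ≠ y → Wf x y = Wg x y := by
  have pi_pos := Real.pi_pos
  have h01 : (1:ℝ) ∈ Icc (0:ℝ) 1 := by norm_num
  -- lifted boundary isotopies
  obtain ⟨F, hFc, hF0, hFper, hFlift, hFρ⟩ := hρI
  obtain ⟨G, hGc, hG0, hGper, hGlift, hGρ⟩ := hρJ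
  have hF1c : Continuous (F 1) := hFc.comp (Continuous.prodMk continuous_const continuous_id)
  have hG1c : Continuous (G 1) := hGc.comp (Continuous.prodMk continuous_const continuous_id)
  have hF1G1 : F 1 = G 1 := by
    apply rot_eq hF1c hG1c _ (hGper 1 h01) hFρ hGρ
    intro s
    rw [← hFlift 1 h01 s, ← hGlift 1 h01 s, hend]
  have hinjI : ∀ t ∈ Icc (0:ℝ) 1, Set.InjOn (I.ft t) Disk := fun t ht => (I.bijOn t ht).injOn
  have hinjJ : ∀ t ∈ Icc (0:ℝ) 1, Set.InjOn (J.ft t) Disk := fun t ht => (J.bijOn t ht).injOn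
  -- equality on boundary antipodal pairs
  have hbd : ∀ sx : ℝ,
      Wf (Complex.exp (((2*π*sx : ℝ):ℂ) * Complex.I))
         (Complex.exp (((2*π*(sx+1/2) : ℝ):ℂ) * Complex.I))
      = Wg (Complex.exp (((2*π*sx : ℝ):ℂ) * Complex.I))
         (Complex.exp (((2*π*(sx+1/2) : ℝ):ℂ) * Complex.I)) := by
    intro sx
    rw [boundary_winding I.ft hinjI Wf hWf F hFc hF0 hFlift sx,
        boundary_winding J.ft hinjJ Wg hWg G hGc hG0 hGlift sx, hF1G1]
  -- now the path argument
  intro x hx y hy hxy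
  have hnorm_pos : 0 < ‖x - y‖ := by
    rw [norm_pos_iff, sub_ne_zero]; exact hxy
  set u : ℂ := (x - y) / (‖x - y‖ : ℂ) with hu_def
  have hc : ((‖x - y‖ : ℝ):ℂ) ≠ 0 := by
    rw [Complex.ofReal_ne_zero]; exact ne_of_gt hnorm_pos
  have hu_norm : ‖u‖ = 1 := by
    rw [hu_def, norm_div, Complex.norm_real, Real.norm_eq_abs, abs_of_pos hnorm_pos,
      div_self (ne_of_gt hnorm_pos)]
  have hu_ne : u ≠ 0 := by
    intro h; rw [h] at hu_norm; simp at hu_norm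
  have hchord : x - y = (‖x - y‖ : ℂ) * u := by
    rw [hu_def, mul_comm]
    exact (div_mul_cancel₀ _ hc).symm
  set X : ℝ → ℂ := fun s => ((1 - s : ℝ):ℂ) * x + ((s:ℝ):ℂ) * u with hX_def
  set Y : ℝ → ℂ := fun s => ((1 - s : ℝ):ℂ) * y - ((s:ℝ):ℂ) * u with hY_def
  clear_value u X Y
  have hXc : Continuous X := by rw [hX_def]; fun_prop
  have hYc : Continuous Y := by rw [hY_def]; fun_prop
  have hXD : ∀ s ∈ Icc (0:ℝ) 1, X s ∈ Disk := by
    intro s hs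
    have hx1 : ‖x‖ ≤ 1 := by simpa [Disk, Complex.dist_eq] using hx
    simp only [Disk, Metric.mem_closedBall, dist_zero_right, hX_def]
    calc ‖((1 - s : ℝ):ℂ) * x + ((s:ℝ):ℂ) * u‖ ≤ ‖((1 - s : ℝ):ℂ) * x‖ + ‖((s:ℝ):ℂ) * u‖ := norm_add_le _ _
      _ = (1-s) * ‖x‖ + s * ‖u‖ := by
          rw [norm_mul, norm_mul]
          simp only [Complex.norm_real, Real.norm_eq_abs]
          rw [abs_of_nonneg (by linarith [hs.2]), abs_of_nonneg hs.1]
      _ ≤ (1-s) * 1 + s * 1 := by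
          apply add_le_add
          · exact mul_le_mul_of_nonneg_left hx1 (by linarith [hs.2])
          · exact mul_le_mul_of_nonneg_left (le_of_eq hu_norm) hs.1
      _ = 1 := by ring
  have hYD : ∀ s ∈ Icc (0:ℝ) 1, Y s ∈ Disk := by
    intro s hs
    have hy1 : ‖y‖ ≤ 1 := by simpa [Disk, Complex.dist_eq] using hy
    simp only [Disk, Metric.mem_closedBall, dist_zero_right, hY_def]
    calc ‖((1 - s : ℝ):ℂ) * y - ((s:ℝ):ℂ) * u‖ ≤ ‖((1 - s : ℝ):ℂ) * y‖ + ‖((s:ℝ):ℂ) * u‖ := norm_sub_le _ _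
      _ = (1-s) * ‖y‖ + s * ‖u‖ := by
          rw [norm_mul, norm_mul]
          simp only [Complex.norm_real, Real.norm_eq_abs]
          rw [abs_of_nonneg (by linarith [hs.2]), abs_of_nonneg hs.1]
      _ ≤ (1-s) * 1 + s * 1 := by
          apply add_le_add
          · exact mul_le_mul_of_nonneg_left hy1 (by linarith [hs.2])
          · exact mul_le_mul_of_nonneg_left (le_of_eq hu_norm) hs.1
      _ = 1 := by ring
  have hXYne : ∀ s ∈ Icc (0:ℝ) 1, X s ≠ Y s := by
    intro s hs h
    have hdiffeq : X s - Y s = (((1-s) * ‖x - y‖ + 2*s : ℝ):ℂ) * u := by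
      rw [hX_def, hY_def]
      have : ((1 - s : ℝ):ℂ) * x + ((s:ℝ):ℂ) * u - (((1 - s : ℝ):ℂ) * y - ((s:ℝ):ℂ) * u)
          = ((1 - s : ℝ):ℂ) * (x - y) + 2 * ((s:ℝ):ℂ) * u := by ring
      rw [this]
      conv_lhs => rw [hchord]
      push_cast
      ring
    have hcoef : 0 < (1-s) * ‖x - y‖ + 2*s := by
      rcases eq_or_lt_of_le hs.1 with h0 | h0
      · rw [← h0]; simpa using hnorm_pos
      · have : 0 ≤ (1-s) * ‖x - y‖ := mul_nonneg (by linarith [hs.2]) (le_of_lt hnorm_pos)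
        linarith
    rw [sub_eq_zero.mpr h] at hdiffeq
    have := hdiffeq.symm
    rcases mul_eq_zero.mp this with h1 | h1
    · rw [Complex.ofReal_eq_zero] at h1; linarith
    · exact hu_ne h1
  -- the difference function along the path
  set D : ℝ → ℝ := fun s => Wf (X s) (Y s) - Wg (X s) (Y s) with hD_def
  have hDint : ∀ s ∈ Icc (0:ℝ) 1, ∃ n : ℤ, D s = n := by
    intro s hs
    exact windiff_int I.init J.init hend hWf hWg (hXD s hs) (hYD s hs) (hXYne s hs)
  have hDcont : ContinuousOn D (Icc 0 1) := by
    intro s0 hs0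
    obtain ⟨εf, hεfpos, hεf⟩ := wind_locconst I.jointCont hinjI hWf (hXD s0 hs0) (hYD s0 hs0) (hXYne s0 hs0)
    obtain ⟨εg, hεgpos, hεg⟩ := wind_locconst J.jointCont hinjJ hWg (hXD s0 hs0) (hYD s0 hs0) (hXYne s0 hs0)
    set ε : ℝ := min εf εg with hε_def
    have hεpos : 0 < ε := lt_min hεfpos hεgpos
    -- choose δ for continuity of X and Y
    have hXcc := Metric.continuousAt_iff.mp (hXc.continuousAt (x := s0)) ε hεpos
    have hYcc := Metric.continuousAt_iff.mp (hYc.continuousAt (x := s0)) ε hεpos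
    obtain ⟨δ1, hδ1pos, hδ1⟩ := hXcc
    obtain ⟨δ2, hδ2pos, hδ2⟩ := hYcc
    set δ : ℝ := min δ1 δ2 with hδ_def
    have hδpos : 0 < δ := lt_min hδ1pos hδ2pos
    have hev : ∀ᶠ s in nhdsWithin s0 (Icc 0 1), D s = D s0 := by
      filter_upwards [self_mem_nhdsWithin,
        mem_nhdsWithin_of_mem_nhds (Metric.ball_mem_nhds s0 hδpos)] with s hsI hsb
      have hdX : dist (X s) (X s0) < ε := hδ1 (lt_of_lt_of_le hsb (min_le_left _ _))
      have hdY : dist (Y s) (Y s0) < ε := hδ2 (lt_of_lt_of_le hsb (min_le_right _ _))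
      have h1 : |Wf (X s) (Y s) - Wf (X s0) (Y s0)| < 1/2 :=
        hεf (X s) (hXD s hsI) (Y s) (hYD s hsI) (hXYne s hsI)
          (lt_of_lt_of_le hdX (min_le_left _ _)) (lt_of_lt_of_le hdY (min_le_left _ _))
      have h2 : |Wg (X s) (Y s) - Wg (X s0) (Y s0)| < 1/2 :=
        hεg (X s) (hXD s hsI) (Y s) (hYD s hsI) (hXYne s hsI)
          (lt_of_lt_of_le hdX (min_le_right _ _)) (lt_of_lt_of_le hdY (min_le_right _ _))
      obtain ⟨n, hn⟩ := hDint s hsI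
      obtain ⟨m, hm⟩ := hDint s0 hs0
      have hlt : |D s - D s0| < 1 := by
        have : D s - D s0 = (Wf (X s) (Y s) - Wf (X s0) (Y s0))
            - (Wg (X s) (Y s) - Wg (X s0) (Y s0)) := by rw [hD_def]; ring
        rw [this]
        calc |(Wf (X s) (Y s) - Wf (X s0) (Y s0)) - (Wg (X s) (Y s) - Wg (X s0) (Y s0))|
            ≤ |Wf (X s) (Y s) - Wf (X s0) (Y s0)| + |Wg (X s) (Y s) - Wg (X s0) (Y s0)| := by
              rw [sub_eq_add_neg]
              refine le_trans (abs_add_le _ _) ?_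
              rw [abs_neg]
          _ < 1/2 + 1/2 := add_lt_add h1 h2
          _ = 1 := by norm_num
      rw [hn, hm] at hlt ⊢
      have : |(n:ℝ) - m| < 1 := hlt
      have hnm : n = m := by
        have he : (n:ℝ) - m = ((n - m : ℤ) : ℝ) := by push_cast; ring
        rw [he, ← Int.cast_abs] at this
        have h3 : |n - m| < 1 := by exact_mod_cast this
        have := Int.abs_lt_one_iff.mp h3
        omega
      rw [hnm]
    exact (continuousWithinAt_const (b := D s0)).congr_of_eventuallyEq hev rfl
  -- endpoints
  have hD10 : D 1 = D 0 := intval_eq hDcont hDint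
  have hX0 : X 0 = x := by rw [hX_def]; push_cast; ring
  have hY0 : Y 0 = y := by rw [hY_def]; push_cast; ring
  have hX1 : X 1 = u := by rw [hX_def]; push_cast; ring
  have hY1 : Y 1 = -u := by rw [hY_def]; push_cast; ring
  -- boundary pair as exponentials
  set sx : ℝ := Complex.arg u / (2*π) with hsx_def
  have h2pi : (2:ℝ) * π ≠ 0 := by positivity
  have hexpu : Complex.exp (((2*π*sx : ℝ):ℂ) * Complex.I) = u := by
    have : (2*π*sx : ℝ) = Complex.arg u := by rw [hsx_def]; field_simp
    rw [this]
    have := Complex.norm_mul_exp_arg_mul_I u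
    rw [hu_norm] at this
    simpa using this
  have hexpmu : Complex.exp (((2*π*(sx+1/2) : ℝ):ℂ) * Complex.I) = -u := by
    have harg : (2*π*(sx+1/2) : ℝ) = 2*π*sx + π := by ring
    rw [harg]
    push_cast
    rw [add_mul, Complex.exp_add, Complex.exp_pi_mul_I]
    have : ((2*π*sx : ℝ):ℂ) = 2*(π:ℂ)*(sx:ℂ) := by push_cast; ring
    rw [← this, hexpu]
    ring
  have hbd' : Wf u (-u) = Wg u (-u) := by
    rw [← hexpmu, ← hexpu]
    exact hbd sx
  have hD1 : D 1 = 0 := by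
    rw [hD_def]
    simp only [hX1, hY1]
    rw [hbd']
    ring
  have hD0 : D 0 = Wf x y - Wg x y := by
    rw [hD_def]
    simp only [hX0, hY0]
  have : Wf x y - Wg x y = 0 := by rw [← hD0, ← hD10, hD1]
  linarith
end
end
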